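/- arXiv:1701.08335 — 6 statements merged into one kernel-verified Lean document; each statement's English description precedes it below -/
import Mathlib

section
/- The minimum number of complete bipartite subgraphs needed to partition the edge set of the complete graph K_n is exactly n-1. -/
open Finset

/-- Edge set of the complete bipartite graph with parts `A` and `B`. -/
def bicliqueEdges {V : Type*} (A B : Finset V) : Set (Sym2 V) :=
  {e | ∃ a ∈ A, ∃ b ∈ B, e = s(a, b)}

/-- `f_2(G)`: minimum number of complete bipartite subgraphs needed to partition
the edge set of the graph `G`. -/
noncomputable def f2 {V : Type*} (G : SimpleGraph V) : ℕ :=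
  sInf {m | ∃ A B : Fin m → Finset V,
    (∀ k, Disjoint (A k) (B k)) ∧
    (∀ k, bicliqueEdges (A k) (B k) ⊆ G.edgeSet) ∧
    ∀ e ∈ G.edgeSet, ∃! k, e ∈ bicliqueEdges (A k) (B k)}

/-- Edge set of the complete `r`-partite `r`-uniform hypergraph with parts `P`. -/
def crossEdges {V : Type*} [DecidableEq V] {r : ℕ} (P : Fin r → Finset V) : Set (Finset V) :=
  {e | ∃ f : Fin r → V, (∀ i, f i ∈ P i) ∧ e = Finset.image f Finset.univ}

/-- `f_r(n)`: minimum number of complete `r`-partite `r`-uniform hypergraphs needed to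
partition the edge set of the complete `r`-uniform hypergraph on `n` vertices. -/
noncomputable def fr (r n : ℕ) : ℕ :=
  sInf {m | ∃ P : Fin m → Fin r → Finset (Fin n),
    (∀ k, Pairwise (Function.onFun Disjoint (P k))) ∧
    ∀ e : Finset (Fin n), e.card = r → ∃! k, e ∈ crossEdges (P k)}

/-- `g(G,H)`: minimum number of blocks (products of edge sets of complete
bipartite subgraphs of `G` and `H` respectively) needed to partition `E(G) × E(H)`. -/
noncomputable def gGH {V W : Type*} (G : SimpleGraph V) (H : SimpleGraph W) : ℕ :=
  sInf {m | ∃ A B : Fin m → Finset V, ∃ C D : Fin m → Finset W,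
    (∀ k, Disjoint (A k) (B k)) ∧ (∀ k, Disjoint (C k) (D k)) ∧
    (∀ k, bicliqueEdges (A k) (B k) ⊆ G.edgeSet) ∧
    (∀ k, bicliqueEdges (C k) (D k) ⊆ H.edgeSet) ∧
    ∀ p : Sym2 V × Sym2 W, p.1 ∈ G.edgeSet → p.2 ∈ H.edgeSet →
      ∃! k, p.1 ∈ bicliqueEdges (A k) (B k) ∧ p.2 ∈ bicliqueEdges (C k) (D k)}

/-- `g(n) = g(K_n, K_n)`. -/
noncomputable def gn (n : ℕ) : ℕ :=
  gGH (SimpleGraph.completeGraph (Fin n)) (SimpleGraph.completeGraph (Fin n))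

lemma mem_bicliqueEdges_iff {V : Type*} {A B : Finset V} {i j : V} :
    s(i, j) ∈ bicliqueEdges A B ↔ (i ∈ A ∧ j ∈ B) ∨ (j ∈ A ∧ i ∈ B) := by
  constructor
  · rintro ⟨a, ha, b, hb, h⟩
    rcases Sym2.eq_iff.mp h with ⟨rfl, rfl⟩ | ⟨rfl, rfl⟩
    · exact Or.inl ⟨ha, hb⟩
    · exact Or.inr ⟨ha, hb⟩
  · rintro (⟨hi, hj⟩ | ⟨hj, hi⟩)
    · exact ⟨i, hi, j, hj, rfl⟩
    · exact ⟨j, hj, i, hi, Sym2.eq_swap.symm⟩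

lemma gp_lower (n m : ℕ) (A B : Fin m → Finset (Fin n))
    (hd : ∀ k, Disjoint (A k) (B k))
    (hu : ∀ e ∈ (SimpleGraph.completeGraph (Fin n)).edgeSet, ∃! k, e ∈ bicliqueEdges (A k) (B k)) :
    n - 1 ≤ m := by
  classical
  by_contra hcon
  push_neg at hcon
  have hmn : m + 1 < n := by omega
  set S : Fin (m + 1) → Finset (Fin n) := Fin.cons Finset.univ A with hS
  set Φ : (Fin n → ℝ) →ₗ[ℝ] (Fin (m + 1) → ℝ) :=
    LinearMap.pi (fun k => ∑ a ∈ S k, LinearMap.proj a) with hΦdef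
  have hΦapp : ∀ x k, Φ x k = ∑ a ∈ S k, x a := by
    intro x k
    simp [hΦdef, LinearMap.pi_apply, LinearMap.sum_apply, LinearMap.proj_apply]
  have hker : LinearMap.ker Φ ≠ ⊥ := by
    intro h
    have hinj : Function.Injective Φ := LinearMap.ker_eq_bot.mp h
    have := LinearMap.finrank_le_finrank_of_injective hinj
    simp [Module.finrank_fintype_fun_eq_card] at this
    omega
  obtain ⟨x, hxker, hx0⟩ := (Submodule.ne_bot_iff _).mp hker
  have hxS : ∀ k, ∑ a ∈ S k, x a = 0 := by
    intro k
    have h1 : Φ x = 0 := hxker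
    have h2 := congrFun h1 k
    rwa [hΦapp] at h2
  have hxuniv : ∑ i, x i = 0 := by
    have := hxS 0
    simpa [hS, Fin.cons_zero] using this
  have hxA : ∀ k, ∑ a ∈ A k, x a = 0 := by
    intro k
    have := hxS k.succ
    simpa [hS, Fin.cons_succ] using this
  have hsq : (∑ i, x i) * (∑ i, x i)
      = (∑ i, x i * x i) + ∑ p ∈ (Finset.univ : Finset (Fin n)).offDiag, x p.1 * x p.2 := by
    rw [Fintype.sum_mul_sum, ← Finset.sum_product', ← Finset.diag_union_offDiag,
      Finset.sum_union (Finset.disjoint_diag_offDiag _), Finset.sum_diag]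
  have step1 : ∀ p ∈ (Finset.univ : Finset (Fin n)).offDiag,
      x p.1 * x p.2 = ∑ k : Fin m,
        ((if p.1 ∈ A k ∧ p.2 ∈ B k then x p.1 * x p.2 else 0)
          + (if p.1 ∈ B k ∧ p.2 ∈ A k then x p.1 * x p.2 else 0)) := by
    rintro ⟨i, j⟩ hp
    simp only [Finset.mem_offDiag] at hp
    have hij : i ≠ j := hp.2.2
    have hedge : s(i, j) ∈ (SimpleGraph.completeGraph (Fin n)).edgeSet := by
      simpa [SimpleGraph.completeGraph] using hij
    obtain ⟨k₀, hk₀, huniq⟩ := hu _ hedge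
    have hterm : ∀ k : Fin m,
        ((if i ∈ A k ∧ j ∈ B k then x i * x j else 0)
          + (if i ∈ B k ∧ j ∈ A k then x i * x j else 0))
        = if s(i, j) ∈ bicliqueEdges (A k) (B k) then x i * x j else 0 := by
      intro k
      by_cases h1 : i ∈ A k ∧ j ∈ B k
      · have h2 : ¬ (i ∈ B k ∧ j ∈ A k) := by
          rintro ⟨hi', _⟩
          exact (Finset.disjoint_left.mp (hd k) h1.1 hi')
        have hm : s(i, j) ∈ bicliqueEdges (A k) (B k) := mem_bicliqueEdges_iff.mpr (Or.inl h1)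
        simp [h1, h2, hm]
      · by_cases h2 : i ∈ B k ∧ j ∈ A k
        · have hm : s(i, j) ∈ bicliqueEdges (A k) (B k) :=
            mem_bicliqueEdges_iff.mpr (Or.inr ⟨h2.2, h2.1⟩)
          simp [h1, h2, hm]
        · have hm : s(i, j) ∉ bicliqueEdges (A k) (B k) := by
            intro hm
            rcases mem_bicliqueEdges_iff.mp hm with h | h
            exacts [h1 h, h2 ⟨h.2, h.1⟩]
          simp [h1, h2, hm]
    simp only [hterm]
    have hfilter : Finset.univ.filter (fun k => s(i, j) ∈ bicliqueEdges (A k) (B k)) = {k₀} := by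
      ext k
      simp only [Finset.mem_filter, Finset.mem_univ, true_and, Finset.mem_singleton]
      exact ⟨fun h => huniq k h, fun h => h ▸ hk₀⟩
    rw [← Finset.sum_filter, hfilter, Finset.sum_singleton]
  have inner1 : ∀ (C D : Finset (Fin n)), Disjoint C D →
      ∑ p ∈ (Finset.univ : Finset (Fin n)).offDiag, (if p.1 ∈ C ∧ p.2 ∈ D then x p.1 * x p.2 else 0)
      = (∑ i ∈ C, x i) * (∑ j ∈ D, x j) := by
    intro C D hCD
    have e1 : ∑ p ∈ (Finset.univ : Finset (Fin n)).offDiag,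
          (if p.1 ∈ C ∧ p.2 ∈ D then x p.1 * x p.2 else 0)
        = ∑ p ∈ (Finset.univ ×ˢ Finset.univ : Finset (Fin n × Fin n)),
          (if p.1 ∈ C ∧ p.2 ∈ D then x p.1 * x p.2 else 0) := by
      apply Finset.sum_subset
      · rw [← Finset.diag_union_offDiag]; exact Finset.subset_union_right
      · rintro ⟨i, j⟩ _ hnp
        have hij : i = j := by
          by_contra hne
          exact hnp (Finset.mem_offDiag.mpr ⟨Finset.mem_univ _, Finset.mem_univ _, hne⟩)
        subst hij
        simp only [ite_eq_right_iff]
        rintro ⟨hc, hdd⟩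
        exact absurd hdd (Finset.disjoint_left.mp hCD hc)
    rw [e1, ← Finset.sum_filter]
    have e2 : (Finset.univ ×ˢ Finset.univ : Finset (Fin n × Fin n)).filter
          (fun p => p.1 ∈ C ∧ p.2 ∈ D) = C ×ˢ D := by
      ext p
      simp [Finset.mem_filter, Finset.mem_product]
    rw [e2, Finset.sum_mul_sum]
    exact Finset.sum_product' C D (fun i j => x i * x j)
  have hoff : ∑ p ∈ (Finset.univ : Finset (Fin n)).offDiag, x p.1 * x p.2 = 0 := by
    rw [Finset.sum_congr rfl step1, Finset.sum_comm]
    apply Finset.sum_eq_zero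
    intro k _
    rw [Finset.sum_add_distrib, inner1 (A k) (B k) (hd k), inner1 (B k) (A k) (hd k).symm,
      hxA k]
    ring
  have hsum0 : ∑ i, x i * x i = 0 := by
    have h := hsq
    rw [hxuniv, hoff] at h
    linarith
  have : ∀ i ∈ (Finset.univ : Finset (Fin n)), x i * x i = 0 :=
    (Finset.sum_eq_zero_iff_of_nonneg (fun i _ => mul_self_nonneg (x i))).mp hsum0
  exact hx0 (funext fun i => mul_self_eq_zero.mp (this i (Finset.mem_univ i)))

lemma gp_upper (n : ℕ) (hn : 2 ≤ n) :
    ∃ A B : Fin (n - 1) → Finset (Fin n),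
      (∀ k, Disjoint (A k) (B k)) ∧
      (∀ k, bicliqueEdges (A k) (B k) ⊆ (SimpleGraph.completeGraph (Fin n)).edgeSet) ∧
      ∀ e ∈ (SimpleGraph.completeGraph (Fin n)).edgeSet, ∃! k, e ∈ bicliqueEdges (A k) (B k) := by
  classical
  have hlt : ∀ k : Fin (n - 1), (k : ℕ) < n := fun k => lt_of_lt_of_le k.2 (Nat.sub_le n 1)
  refine ⟨fun k => {⟨k, hlt k⟩}, fun k => Finset.univ.filter (fun j => (k : ℕ) < (j : ℕ)),
    ?_, ?_, ?_⟩
  · intro k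
    rw [Finset.disjoint_left]
    rintro a ha hb
    simp only [Finset.mem_singleton] at ha
    simp only [Finset.mem_filter] at hb
    subst ha
    exact absurd hb.2 (lt_irrefl _)
  · rintro k e ⟨a, ha, b, hb, rfl⟩
    simp only [Finset.mem_singleton] at ha
    simp only [Finset.mem_filter] at hb
    subst ha
    have hne : (⟨(k : ℕ), hlt k⟩ : Fin n) ≠ b := by
      intro h
      rw [← h] at hb
      exact absurd hb.2 (lt_irrefl _)
    simpa [SimpleGraph.completeGraph] using hne
  · have key : ∀ i j : Fin n, (i : ℕ) < (j : ℕ) →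
        ∃! k : Fin (n - 1), s(i, j) ∈ bicliqueEdges
          ({(⟨(k : ℕ), hlt k⟩ : Fin n)} : Finset (Fin n))
          (Finset.univ.filter (fun j' : Fin n => (k : ℕ) < (j' : ℕ))) := by
      intro i j hij
      have hin1 : (i : ℕ) < n - 1 := by
        have := j.2
        omega
      refine ⟨⟨(i : ℕ), hin1⟩, ?_, ?_⟩
      · refine mem_bicliqueEdges_iff.mpr (Or.inl ⟨?_, ?_⟩)
        · simp
        · simp only [Finset.mem_filter]
          exact ⟨Finset.mem_univ _, hij⟩
      · intro k hk
        rcases mem_bicliqueEdges_iff.mp hk with ⟨ha, hb⟩ | ⟨ha, hb⟩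
        · simp only [Finset.mem_singleton] at ha
          have hval : (i : ℕ) = (k : ℕ) := congrArg Fin.val ha
          exact Fin.ext hval.symm
        · simp only [Finset.mem_singleton] at ha
          simp only [Finset.mem_filter] at hb
          have h1 : (j : ℕ) = (k : ℕ) := congrArg Fin.val ha
          have h2 : (k : ℕ) < (i : ℕ) := hb.2
          omega
    intro e
    induction e using Sym2.ind with
    | _ i j =>
      intro he
      have hij : i ≠ j := by simpa [SimpleGraph.completeGraph] using he
      have hvv : (i : ℕ) ≠ (j : ℕ) := fun h => hij (Fin.ext h)
      rcases lt_or_gt_of_ne hvv with h | h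
      · exact key i j h
      · rw [Sym2.eq_swap]
        exact key j i h

theorem stmt0 (n : ℕ) (hn : 2 ≤ n) :
    f2 (SimpleGraph.completeGraph (Fin n)) = n - 1 := by
  have hmem : (n - 1) ∈ {m | ∃ A B : Fin m → Finset (Fin n),
      (∀ k, Disjoint (A k) (B k)) ∧
      (∀ k, bicliqueEdges (A k) (B k) ⊆ (SimpleGraph.completeGraph (Fin n)).edgeSet) ∧
      ∀ e ∈ (SimpleGraph.completeGraph (Fin n)).edgeSet, ∃! k, e ∈ bicliqueEdges (A k) (B k)} :=
    gp_upper n hn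
  unfold f2
  apply le_antisymm
  · exact Nat.sInf_le hmem
  · apply le_csInf ⟨_, hmem⟩
    rintro m ⟨A, B, hd, _, hu⟩
    exact gp_lower n m A B hd hu
end

section
/- For each n ≥ r ≥ 1, the edge set of the complete r-uniform hypergraph K_n^{(r)} can be partitioned into at most C(n - ⌈r/2⌉, ⌊r/2⌋) complete r-partite r-uniform hypergraphs. -/
open Finset

def posB {h : ℕ} (b : Fin h → ℕ) (v : ℕ) : ℕ :=
  ((univ : Finset (Fin h)).filter fun i => b i ≤ v).card +
  ((univ : Finset (Fin h)).filter fun i => b i < v).card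

lemma posB_mono {h : ℕ} (b : Fin h → ℕ) {v w : ℕ} (hvw : v ≤ w) : posB b v ≤ posB b w := by
  unfold posB
  apply Nat.add_le_add <;> apply card_le_card <;> intro i hi <;>
    simp only [mem_filter, mem_univ, true_and] at * <;> omega

lemma my_card_filter_lt (h t : ℕ) (ht : t ≤ h) :
    ((univ : Finset (Fin h)).filter fun i : Fin h => (i : ℕ) < t).card = t := by
  have key : ((univ : Finset (Fin h)).filter fun i : Fin h => (i : ℕ) < t)
      = (Finset.range t).attachFin (fun m hm => lt_of_lt_of_le (Finset.mem_range.mp hm) ht) := by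
    ext i
    simp [Finset.mem_attachFin]
  rw [key, Finset.card_attachFin, Finset.card_range]

lemma posB_at {h : ℕ} {b : Fin h → ℕ} (hb : StrictMono b) (i : Fin h) :
    posB b (b i) = 2 * (i : ℕ) + 1 := by
  unfold posB
  have e1 : ((univ : Finset (Fin h)).filter fun i' => b i' ≤ b i)
      = (univ : Finset (Fin h)).filter fun i' : Fin h => (i' : ℕ) < (i : ℕ) + 1 := by
    apply filter_congr
    intro i' _
    simp only [hb.le_iff_le, Fin.le_def]
    omega
  have e2 : ((univ : Finset (Fin h)).filter fun i' => b i' < b i)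
      = (univ : Finset (Fin h)).filter fun i' : Fin h => (i' : ℕ) < (i : ℕ) := by
    apply filter_congr
    intro i' _
    simp only [hb.lt_iff_lt, Fin.lt_def]
  rw [e1, e2, my_card_filter_lt h _ (by have := i.isLt; omega),
    my_card_filter_lt h _ (by have := i.isLt; omega)]
  omega

lemma posB_even {h : ℕ} {b : Fin h → ℕ} {v : ℕ} (hv : ∀ i, b i ≠ v) :
    posB b v = 2 * ((univ : Finset (Fin h)).filter fun i => b i < v).card := by
  unfold posB
  have e1 : ((univ : Finset (Fin h)).filter fun i => b i ≤ v)
      = (univ : Finset (Fin h)).filter fun i => b i < v := by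
    apply filter_congr
    intro i _
    have := hv i
    omega
  rw [e1]
  omega

lemma strictMono_le_apply' {N : ℕ} {f : Fin N → ℕ} (hf : StrictMono f) (j : Fin N) :
    (j : ℕ) ≤ f j := by
  obtain ⟨j, hj⟩ := j
  induction j with
  | zero => exact Nat.zero_le _
  | succ t ih =>
    have h1 : (⟨t, Nat.lt_of_succ_lt hj⟩ : Fin N) < ⟨t + 1, hj⟩ := by
      rw [Fin.mk_lt_mk]; omega
    have h2 := hf h1
    have h3 := ih (Nat.lt_of_succ_lt hj)
    simp only [Fin.val_mk] at h3 ⊢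
    omega

lemma strictMono_apply_le' {N n : ℕ} {f : Fin N → Fin n} (hf : StrictMono f) (j : Fin N) :
    (f j : ℕ) + (N - 1 - (j : ℕ)) ≤ n - 1 := by
  have hg : StrictMono (fun i : Fin N => (n - 1) - (f i.rev : ℕ)) := by
    intro i i' hii'
    have h1 : i'.rev < i.rev := by rwa [Fin.rev_lt_rev]
    have h2 := hf h1
    have h3 := (f i.rev).isLt
    have h4 := (f i'.rev).isLt
    rw [Fin.lt_def] at h2
    show (n - 1) - (f i.rev : ℕ) < (n - 1) - (f i'.rev : ℕ)
    omega
  have h5 := strictMono_le_apply' hg j.rev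
  rw [Fin.rev_rev] at h5
  have h6 : (j.rev : ℕ) = N - 1 - (j : ℕ) := by
    have := j.isLt
    rw [Fin.val_rev]
    omega
  have h7 := (f j).isLt
  have h8 := j.isLt
  omega

lemma strictMono_gap {N : ℕ} {f : Fin N → ℕ} (hf : StrictMono f) (a : Fin N) :
    ∀ k (hk : (a : ℕ) + k < N), f a + k ≤ f ⟨(a : ℕ) + k, hk⟩ := by
  intro k
  induction k with
  | zero =>
    intro hk
    have he : (⟨(a : ℕ) + 0, hk⟩ : Fin N) = a := Fin.ext (by simp)
    rw [he]
    omega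
  | succ t ih =>
    intro hk
    have hk' : (a : ℕ) + t < N := by omega
    have h1 := ih hk'
    have h2 : (⟨(a : ℕ) + t, hk'⟩ : Fin N) < ⟨(a : ℕ) + (t + 1), hk⟩ := by
      rw [Fin.mk_lt_mk]; omega
    have h3 := hf h2
    omega

lemma mem_crossEdges_iff {n r : ℕ} {P : Fin r → Finset (Fin n)}
    (hP : Pairwise (Function.onFun Disjoint P)) {e : Finset (Fin n)} (he : e.card = r) :
    e ∈ crossEdges P ↔ ∀ j, ∃ v ∈ e, v ∈ P j := by
  constructor
  · rintro ⟨f, hf, rfl⟩ j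
    exact ⟨f j, Finset.mem_image_of_mem f (Finset.mem_univ j), hf j⟩
  · intro hits
    choose f hf1 hf2 using hits
    have hinj : Function.Injective f := by
      intro j j' hjj'
      by_contra hne
      exact Finset.disjoint_left.mp (hP hne) (hf2 j) (hjj' ▸ hf2 j')
    refine ⟨f, hf2, ?_⟩
    refine (Finset.eq_of_subset_of_card_le ?_ ?_).symm
    · intro v hv
      obtain ⟨j, _, rfl⟩ := Finset.mem_image.mp hv
      exact hf1 j
    · rw [Finset.card_image_of_injective _ hinj, Finset.card_univ, Fintype.card_fin, he]

lemma hits_iff {n r h : ℕ} (hh1 : 2 * h ≤ r) (hh2 : r ≤ 2 * h + 1)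
    {b : Fin h → ℕ} (hb : StrictMono b) {e : Finset (Fin n)} (he : e.card = r) :
    (∀ j : Fin r, ∃ v ∈ e, posB b (v : ℕ) = (j : ℕ)) ↔
      ∀ i : Fin h, b i =
        (e.orderEmbOfFin he ⟨2 * (i : ℕ) + 1, by have := i.isLt; omega⟩ : ℕ) := by
  set x := e.orderEmbOfFin he with hxdef
  constructor
  · intro hits
    choose g hg1 hg2 using hits
    have hginj : Function.Injective g := by
      intro j j' hjj'
      exact Fin.ext (by rw [← hg2 j, ← hg2 j', hjj'])
    have hgmono : StrictMono g := by
      intro j j' hjj'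
      rcases lt_or_ge (g j) (g j') with h1 | h1
      · exact h1
      · exfalso
        have h2 := posB_mono b (Fin.le_def.mp h1)
        rw [hg2 j, hg2 j'] at h2
        have h3 : (j : ℕ) < j' := hjj'
        omega
    have hgx : ∀ j, g j = x j := by
      have h4 := Finset.orderEmbOfFin_unique he hg1 hgmono
      intro j
      rw [h4]
    intro i
    have hi : 2 * (i : ℕ) + 1 < r := by have := i.isLt; omega
    have hpos : posB b (x ⟨2 * (i : ℕ) + 1, hi⟩ : ℕ) = 2 * (i : ℕ) + 1 := by
      rw [← hgx ⟨2 * (i : ℕ) + 1, hi⟩]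
      exact hg2 _
    by_cases hmem : ∃ i0, b i0 = (x ⟨2 * (i : ℕ) + 1, hi⟩ : ℕ)
    · obtain ⟨i0, hi0⟩ := hmem
      have h5 := posB_at hb i0
      rw [hi0, hpos] at h5
      have h6 : i0 = i := Fin.ext (by omega)
      rw [← hi0, h6]
    · push_neg at hmem
      have h7 := posB_even hmem
      omega
  · intro hbx j
    refine ⟨x j, Finset.orderEmbOfFin_mem e he j, ?_⟩
    unfold posB
    have key1 : ((univ : Finset (Fin h)).filter fun i => b i ≤ (x j : ℕ))
        = (univ : Finset (Fin h)).filter fun i : Fin h => (i : ℕ) < ((j : ℕ) + 1) / 2 := by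
      apply filter_congr
      intro i _
      have hi : 2 * (i : ℕ) + 1 < r := by have := i.isLt; omega
      rw [hbx i]
      have key : ((x ⟨2 * (i : ℕ) + 1, hi⟩ : Fin n) : ℕ) ≤ (x j : ℕ) ↔
          2 * (i : ℕ) + 1 ≤ (j : ℕ) := by
        rw [← Fin.le_def, x.le_iff_le, Fin.le_def, Fin.val_mk]
      rw [key]
      omega
    have key2 : ((univ : Finset (Fin h)).filter fun i => b i < (x j : ℕ))
        = (univ : Finset (Fin h)).filter fun i : Fin h => (i : ℕ) < (j : ℕ) / 2 := by
      apply filter_congr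
      intro i _
      have hi : 2 * (i : ℕ) + 1 < r := by have := i.isLt; omega
      rw [hbx i]
      have key : ((x ⟨2 * (i : ℕ) + 1, hi⟩ : Fin n) : ℕ) < (x j : ℕ) ↔
          2 * (i : ℕ) + 1 < (j : ℕ) := by
        rw [← Fin.lt_def, x.lt_iff_lt, Fin.lt_def, Fin.val_mk]
      rw [key]
      omega
    have hj := j.isLt
    rw [key1, key2, my_card_filter_lt h _ (by omega), my_card_filter_lt h _ (by omega)]
    omega

theorem stmt1 (r n : ℕ) (hr : 1 ≤ r) (hn : r ≤ n) :
    ∃ P : Fin (Nat.choose (n - (r + 1) / 2) (r / 2)) → Fin r → Finset (Fin n),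
      (∀ k, Pairwise (Function.onFun Disjoint (P k))) ∧
      ∀ e : Finset (Fin n), e.card = r → ∃! k, e ∈ crossEdges (P k) := by
  classical
  set h := r / 2 with hh
  set m := n - (r + 1) / 2 with hm
  have hh1 : 2 * h ≤ r := by omega
  have hh2 : r ≤ 2 * h + 1 := by omega
  have hcard : Fintype.card {s : Finset (Fin m) // s.card = h} = Nat.choose m h := by
    rw [Fintype.card_finset_len, Fintype.card_fin]
  let E : Fin (Nat.choose m h) ≃ {s : Finset (Fin m) // s.card = h} :=
    (Fintype.equivFinOfCardEq hcard).symm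
  let bOf : {s : Finset (Fin m) // s.card = h} → Fin h → ℕ :=
    fun c i => ((c.1.orderEmbOfFin c.2 i : Fin m) : ℕ) + (i : ℕ) + 1
  have bOf_mono : ∀ c, StrictMono (bOf c) := by
    intro c i i' hii'
    have h1 := (c.1.orderEmbOfFin c.2).strictMono hii'
    rw [Fin.lt_def] at h1
    have h2 : (i : ℕ) < (i' : ℕ) := hii'
    show ((c.1.orderEmbOfFin c.2 i : Fin m) : ℕ) + (i : ℕ) + 1 <
      ((c.1.orderEmbOfFin c.2 i' : Fin m) : ℕ) + (i' : ℕ) + 1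
    omega
  -- uniqueness of certificates from their b-values
  have bOf_inj : ∀ c c' : {s : Finset (Fin m) // s.card = h},
      (∀ i, bOf c i = bOf c' i) → c = c' := by
    intro c c' hcc
    have himg : ∀ d : {s : Finset (Fin m) // s.card = h},
        d.1 = Finset.image (fun i => (d.1.orderEmbOfFin d.2 i : Fin m)) univ := by
      intro d
      refine (Finset.eq_of_subset_of_card_le ?_ ?_).symm
      · intro v hv
        obtain ⟨i, _, rfl⟩ := Finset.mem_image.mp hv
        exact Finset.orderEmbOfFin_mem d.1 d.2 i
      · rw [Finset.card_image_of_injective _ (d.1.orderEmbOfFin d.2).injective,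
          Finset.card_univ, Fintype.card_fin, d.2]
    have hfun : ∀ i, (c.1.orderEmbOfFin c.2 i : Fin m) = (c'.1.orderEmbOfFin c'.2 i : Fin m) := by
      intro i
      have := hcc i
      simp only [bOf] at this
      exact Fin.ext (by omega)
    apply Subtype.ext
    rw [himg c, himg c']
    exact Finset.image_congr fun i _ => hfun i
  let P : Fin (Nat.choose m h) → Fin r → Finset (Fin n) :=
    fun k j => univ.filter fun v : Fin n => posB (bOf (E k)) (v : ℕ) = (j : ℕ)
  have hdis : ∀ k, Pairwise (Function.onFun Disjoint (P k)) := by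
    intro k j j' hne
    simp only [Function.onFun]
    rw [Finset.disjoint_left]
    intro v hv hv'
    simp only [P, Finset.mem_filter] at hv hv'
    exact hne (Fin.ext (hv.2 ▸ hv'.2 ▸ rfl))
  refine ⟨P, hdis, ?_⟩
  intro e he
  set x := e.orderEmbOfFin he with hxdef
  have hxmono : StrictMono fun j : Fin r => ((x j : Fin n) : ℕ) := by
    intro a a' haa'
    have := x.strictMono haa'
    rwa [Fin.lt_def] at this
  have hx_lb : ∀ j : Fin r, (j : ℕ) ≤ (x j : ℕ) := fun j => strictMono_le_apply' hxmono j
  have hx_ub : ∀ j : Fin r, (x j : ℕ) + (r - 1 - (j : ℕ)) ≤ n - 1 :=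
    fun j => strictMono_apply_le' x.strictMono j
  have hi2 : ∀ i : Fin h, 2 * (i : ℕ) + 1 < r := fun i => by have := i.isLt; omega
  have hyb : ∀ i : Fin h, (x ⟨2 * (i : ℕ) + 1, hi2 i⟩ : ℕ) - ((i : ℕ) + 1) < m := by
    intro i
    have h1 : (x ⟨2 * (i : ℕ) + 1, hi2 i⟩ : ℕ) + (r - 1 - (2 * (i : ℕ) + 1)) ≤ n - 1 :=
      hx_ub ⟨2 * (i : ℕ) + 1, hi2 i⟩
    have h2 := i.isLt
    omega
  let yv : Fin h → Fin m := fun i => ⟨(x ⟨2 * (i : ℕ) + 1, hi2 i⟩ : ℕ) - ((i : ℕ) + 1), hyb i⟩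
  have hyv_mono : StrictMono yv := by
    intro i i' hii'
    have h4 : (i : ℕ) < (i' : ℕ) := hii'
    have pf : 2 * (i : ℕ) + 1 + 2 * ((i' : ℕ) - (i : ℕ)) < r := by
      have := hi2 i'; omega
    have hgap : (x ⟨2 * (i : ℕ) + 1, hi2 i⟩ : ℕ) + 2 * ((i' : ℕ) - (i : ℕ)) ≤
        (x ⟨2 * (i : ℕ) + 1 + 2 * ((i' : ℕ) - (i : ℕ)), pf⟩ : ℕ) :=
      strictMono_gap hxmono ⟨2 * (i : ℕ) + 1, hi2 i⟩ (2 * ((i' : ℕ) - (i : ℕ))) pf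
    have heq : (⟨2 * (i : ℕ) + 1 + 2 * ((i' : ℕ) - (i : ℕ)), pf⟩ : Fin r)
        = ⟨2 * (i' : ℕ) + 1, hi2 i'⟩ := by
      apply Fin.ext
      show 2 * (i : ℕ) + 1 + 2 * ((i' : ℕ) - (i : ℕ)) = 2 * (i' : ℕ) + 1
      omega
    rw [heq] at hgap
    have h3 : 2 * (i : ℕ) + 1 ≤ (x ⟨2 * (i : ℕ) + 1, hi2 i⟩ : ℕ) :=
      hx_lb ⟨2 * (i : ℕ) + 1, hi2 i⟩
    show (x ⟨2 * (i : ℕ) + 1, hi2 i⟩ : ℕ) - ((i : ℕ) + 1) <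
      (x ⟨2 * (i' : ℕ) + 1, hi2 i'⟩ : ℕ) - ((i' : ℕ) + 1)
    omega
  let s : Finset (Fin m) := Finset.image yv univ
  have hs : s.card = h := by
    rw [Finset.card_image_of_injective _ hyv_mono.injective, Finset.card_univ, Fintype.card_fin]
  have hyv_eq : ∀ i, (s.orderEmbOfFin hs i : Fin m) = yv i := by
    have h5 := Finset.orderEmbOfFin_unique hs
      (f := yv) (fun i => Finset.mem_image_of_mem yv (mem_univ i)) hyv_mono
    intro i
    exact (congrFun h5 i).symm
  have hbOf_s : ∀ i : Fin h, bOf ⟨s, hs⟩ i = (x ⟨2 * (i : ℕ) + 1, hi2 i⟩ : ℕ) := by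
    intro i
    show ((s.orderEmbOfFin hs i : Fin m) : ℕ) + (i : ℕ) + 1 = _
    rw [hyv_eq i]
    show (x ⟨2 * (i : ℕ) + 1, hi2 i⟩ : ℕ) - ((i : ℕ) + 1) + (i : ℕ) + 1 = _
    have h3 : 2 * (i : ℕ) + 1 ≤ (x ⟨2 * (i : ℕ) + 1, hi2 i⟩ : ℕ) :=
      hx_lb ⟨2 * (i : ℕ) + 1, hi2 i⟩
    omega
  have hmem_iff : ∀ k, e ∈ crossEdges (P k) ↔
      ∀ i : Fin h, bOf (E k) i = (x ⟨2 * (i : ℕ) + 1, hi2 i⟩ : ℕ) := by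
    intro k
    have hfil : (∀ j : Fin r, ∃ v ∈ e, v ∈ P k j) ↔
        ∀ j : Fin r, ∃ v ∈ e, posB (bOf (E k)) (v : ℕ) = (j : ℕ) := by
      simp only [P, Finset.mem_filter, Finset.mem_univ, true_and]
    rw [mem_crossEdges_iff (hdis k) he, hfil]
    exact hits_iff hh1 hh2 (bOf_mono (E k)) he
  refine ⟨E.symm ⟨s, hs⟩, ?_, ?_⟩
  · refine (hmem_iff _).mpr ?_
    intro i
    rw [Equiv.apply_symm_apply]
    exact hbOf_s i
  · intro k hk
    have hk' := (hmem_iff k).mp hk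
    have hcert : E k = ⟨s, hs⟩ := bOf_inj _ _ (fun i => by rw [hk' i, hbOf_s i])
    have := congrArg E.symm hcert
    rwa [Equiv.symm_apply_apply] at this
end

section
/- The minimum number of complete bipartite graphs (with real weights) needed to form a weighted decomposition of K_n is n-1. That is, if complete bipartite subgraphs G_1,...,G_q of K_n and reals α_1,...,α_q satisfy, for every edge e of K_n, that the sum of α_i over all i with e ∈ E(G_i) equals 1, then q ≥ n-1. -/
open Finset

open scoped Classical in
/-- Auxiliary: the filtered off-diagonal pairs belonging to a biclique. -/
lemma filter_biclique {n : ℕ} (A B : Finset (Fin n)) (hAB : Disjoint A B) :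
    (Finset.univ.offDiag.filter
      (fun p : Fin n × Fin n => s(p.1, p.2) ∈ bicliqueEdges A B)) = A ×ˢ B ∪ B ×ˢ A := by
  classical
  ext p
  simp only [mem_filter, mem_offDiag, mem_union, mem_product, mem_univ, true_and]
  constructor
  · rintro ⟨hne, a, ha, b, hb, hab⟩
    rw [Sym2.eq_iff] at hab
    rcases hab with ⟨h1, h2⟩ | ⟨h1, h2⟩
    · exact Or.inl ⟨h1 ▸ ha, h2 ▸ hb⟩
    · exact Or.inr ⟨h1 ▸ hb, h2 ▸ ha⟩
  · rintro (⟨h1, h2⟩ | ⟨h1, h2⟩)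
    · exact ⟨fun h => (Finset.disjoint_left.mp hAB h1) (h ▸ h2),
        p.1, h1, p.2, h2, rfl⟩
    · exact ⟨fun h => (Finset.disjoint_left.mp hAB h2) (h.symm ▸ h1),
        p.2, h2, p.1, h1, Sym2.eq_swap⟩

theorem stmt2 (n q : ℕ) (hn : 2 ≤ n)
    (A B : Fin q → Finset (Fin n)) (α : Fin q → ℝ)
    (hdisj : ∀ k, Disjoint (A k) (B k))
    (hw : ∀ e ∈ (SimpleGraph.completeGraph (Fin n)).edgeSet,
      ∑ k, (bicliqueEdges (A k) (B k)).indicator (fun _ => α k) e = 1) :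
    n - 1 ≤ q := by
  classical
  by_contra hq
  push_neg at hq
  have hq' : q + 1 < n := by omega
  -- the linear map recording the total sum and the sums over the `A k`
  set S : Fin (q + 1) → Finset (Fin n) := Fin.cons Finset.univ A with hS
  let L : (Fin n → ℝ) →ₗ[ℝ] (Fin (q + 1) → ℝ) :=
    LinearMap.pi (fun j => ∑ i ∈ S j, LinearMap.proj i)
  have hLapp : ∀ (x : Fin n → ℝ) (j : Fin (q + 1)), L x j = ∑ i ∈ S j, x i := by
    intro x j
    simp [L, LinearMap.pi_apply, LinearMap.sum_apply, LinearMap.proj_apply]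
  have hni : ¬ Function.Injective L := by
    intro h
    have := LinearMap.finrank_le_finrank_of_injective h
    rw [Module.finrank_fin_fun, Module.finrank_fin_fun] at this
    omega
  obtain ⟨x, hxker, hx0⟩ : ∃ x, x ∈ LinearMap.ker L ∧ x ≠ 0 := by
    rw [← Submodule.ne_bot_iff]
    intro h
    exact hni (LinearMap.ker_eq_bot.mp h)
  have hLx : ∀ j, L x j = 0 := fun j => by
    rw [LinearMap.mem_ker] at hxker; rw [hxker]; rfl
  have hsum0 : ∑ i, x i = 0 := by
    have := hLx 0
    rwa [hLapp, hS, Fin.cons_zero] at this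
  have hsumA : ∀ k : Fin q, ∑ i ∈ A k, x i = 0 := by
    intro k
    have := hLx k.succ
    rwa [hLapp, hS, Fin.cons_succ] at this
  -- the key double sum
  set T : ℝ := ∑ p ∈ Finset.univ.offDiag, x p.1 * x p.2 with hT
  have hedge : ∀ p : Fin n × Fin n, p ∈ Finset.univ.offDiag →
      s(p.1, p.2) ∈ (SimpleGraph.completeGraph (Fin n)).edgeSet := by
    intro p hp
    rw [mem_offDiag] at hp
    simpa [SimpleGraph.completeGraph] using hp.2.2
  -- T = 0 via the decomposition
  have hT0 : T = 0 := by
    have h1 : T = ∑ p ∈ Finset.univ.offDiag, (x p.1 * x p.2) *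
        ∑ k, (bicliqueEdges (A k) (B k)).indicator (fun _ => α k) s(p.1, p.2) := by
      rw [hT]
      refine Finset.sum_congr rfl fun p hp => ?_
      rw [hw _ (hedge p hp), mul_one]
    rw [h1]
    have h2 : ∀ p ∈ Finset.univ.offDiag, (x p.1 * x p.2) *
        ∑ k, (bicliqueEdges (A k) (B k)).indicator (fun _ => α k) s(p.1, p.2)
        = ∑ k, (x p.1 * x p.2) *
          (bicliqueEdges (A k) (B k)).indicator (fun _ => α k) s(p.1, p.2) := by
      intro p _; rw [Finset.mul_sum]
    rw [Finset.sum_congr rfl h2, Finset.sum_comm]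
    refine Finset.sum_eq_zero fun k _ => ?_
    have : ∑ p ∈ Finset.univ.offDiag, (x p.1 * x p.2) *
        (bicliqueEdges (A k) (B k)).indicator (fun _ => α k) s(p.1, p.2)
        = ∑ p ∈ Finset.univ.offDiag.filter
            (fun p : Fin n × Fin n => s(p.1, p.2) ∈ bicliqueEdges (A k) (B k)),
          (x p.1 * x p.2) * α k := by
      rw [Finset.sum_filter]
      refine Finset.sum_congr rfl fun p _ => ?_
      rw [Set.indicator_apply]
      split <;> simp
    rw [this, filter_biclique (A k) (B k) (hdisj k), Finset.sum_union, Finset.sum_product,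
      Finset.sum_product]
    · have e1 : ∑ a ∈ A k, ∑ b ∈ B k, x a * x b * α k
          = (∑ a ∈ A k, x a) * (∑ b ∈ B k, x b) * α k := by
        rw [Finset.sum_mul_sum, Finset.sum_mul]
        refine Finset.sum_congr rfl fun a _ => ?_
        rw [Finset.sum_mul]
      have e2 : ∑ b ∈ B k, ∑ a ∈ A k, x b * x a * α k
          = (∑ b ∈ B k, x b) * (∑ a ∈ A k, x a) * α k := by
        rw [Finset.sum_mul_sum, Finset.sum_mul]
        refine Finset.sum_congr rfl fun b _ => ?_
        rw [Finset.sum_mul]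
      rw [e1, e2, hsumA k]
      ring
    · rw [Finset.disjoint_left]
      rintro p hp1 hp2
      rw [Finset.mem_product] at hp1 hp2
      exact Finset.disjoint_left.mp (hdisj k) hp1.1 hp2.1
  -- but also T = -∑ x i ^ 2
  have hTneg : T = -(∑ i, x i ^ 2) := by
    have h3 : ∑ p ∈ (Finset.univ : Finset (Fin n)).diag, x p.1 * x p.2
        + ∑ p ∈ Finset.univ.offDiag, x p.1 * x p.2
        = ∑ p ∈ (Finset.univ : Finset (Fin n)) ×ˢ Finset.univ, x p.1 * x p.2 := by
      rw [← Finset.sum_union (Finset.disjoint_diag_offDiag _), Finset.diag_union_offDiag]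
    have h4 : ∑ p ∈ (Finset.univ : Finset (Fin n)) ×ˢ Finset.univ, x p.1 * x p.2 = 0 := by
      rw [Finset.sum_product, ← Finset.sum_mul_sum, hsum0, mul_zero]
    have h5 : ∑ p ∈ (Finset.univ : Finset (Fin n)).diag, x p.1 * x p.2 = ∑ i, x i ^ 2 := by
      rw [Finset.sum_diag]
      exact Finset.sum_congr rfl fun i _ => (sq (x i)).symm
    rw [h4, h5] at h3
    linarith [h3]
  have hx2 : ∑ i, x i ^ 2 = 0 := by rw [hT0] at hTneg; linarith
  apply hx0
  funext i
  have := (Finset.sum_eq_zero_iff_of_nonneg (fun i _ => sq_nonneg (x i))).mp hx2 i (mem_univ i)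
  exact pow_eq_zero_iff (by norm_num) |>.mp this
end

section
/- If g(n) ≤ α n² for all n, where g(n) is the minimum number of blocks needed to partition E(K_n) × E(K_n), then f_4(n) ≤ α n²/2 + C n log n for some constant C (and hence f_4(n) ≤ α(1+o(1)) n²/2). -/
open Finset

set_option linter.unusedSectionVars false

section Lemmas
open Function

variable {V : Type*} [DecidableEq V]

theorem cross_subset {r : ℕ} {P : Fin r → Finset V} {e : Finset V}
    (h : e ∈ crossEdges P) : ∀ x ∈ e, ∃ i, x ∈ P i := by
  obtain ⟨f, hf, rfl⟩ := h
  intro x hx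
  obtain ⟨i, -, rfl⟩ := Finset.mem_image.1 hx
  exact ⟨i, hf i⟩

theorem cross_iff {r : ℕ} {P : Fin r → Finset V} {e : Finset V}
    (hd : Pairwise (Function.onFun Disjoint P)) (he : e.card = r) :
    e ∈ crossEdges P ↔ ∀ i, ∃ x ∈ e, x ∈ P i := by
  constructor
  · rintro ⟨f, hf, rfl⟩ i
    exact ⟨f i, Finset.mem_image_of_mem f (Finset.mem_univ i), hf i⟩
  · intro h
    choose g hg1 hg2 using h
    have hginj : Function.Injective g := by
      intro i j hij
      by_contra hne
      exact Finset.disjoint_left.1 (hd hne) (hg2 i) (hij ▸ hg2 j)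
    have hsub : Finset.image g Finset.univ ⊆ e := by
      intro x hx
      obtain ⟨i, -, rfl⟩ := Finset.mem_image.1 hx
      exact hg1 i
    have hcard : (Finset.image g Finset.univ).card = e.card := by
      rw [Finset.card_image_of_injective _ hginj, Finset.card_univ, Fintype.card_fin, he]
    exact ⟨g, hg2, (Finset.eq_of_subset_of_card_le hsub hcard.ge).symm⟩

theorem biclique_iff {A B : Finset V} {a b : V} :
    s(a, b) ∈ bicliqueEdges A B ↔ (a ∈ A ∧ b ∈ B) ∨ (b ∈ A ∧ a ∈ B) := by
  constructor
  · rintro ⟨x, hx, y, hy, hxy⟩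
    rw [Sym2.eq_iff] at hxy
    rcases hxy with ⟨rfl, rfl⟩ | ⟨rfl, rfl⟩
    · exact Or.inl ⟨hx, hy⟩
    · exact Or.inr ⟨hx, hy⟩
  · rintro (⟨ha, hb⟩ | ⟨hb, ha⟩)
    · exact ⟨a, ha, b, hb, rfl⟩
    · exact ⟨b, hb, a, ha, Sym2.eq_swap⟩

theorem sym2_rep {W : Type*} [LinearOrder W] {e : Sym2 W} (he : ¬ e.IsDiag) :
    ∃ a b : W, a < b ∧ e = s(a, b) := by
  induction e with
  | _ x y =>
    rw [Sym2.mk_isDiag_iff] at he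
    rcases lt_or_gt_of_ne he with h | h
    · exact ⟨x, y, h, rfl⟩
    · exact ⟨y, x, h, Sym2.eq_swap⟩

theorem sym2_rep_unique {W : Type*} [LinearOrder W] {a b a' b' : W} (h : a < b) (h' : a' < b')
    (heq : s(a, b) = s(a', b')) : a = a' ∧ b = b' := by
  rw [Sym2.eq_iff] at heq
  rcases heq with ⟨rfl, rfl⟩ | ⟨rfl, rfl⟩
  · exact ⟨rfl, rfl⟩
  · exact absurd h' (not_lt.2 h.le)

end Lemmas

def frSet (r n : ℕ) : Set ℕ := {m | ∃ P : Fin m → Fin r → Finset (Fin n),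
    (∀ k, Pairwise (Function.onFun Disjoint (P k))) ∧
    ∀ e : Finset (Fin n), e.card = r → ∃! k, e ∈ crossEdges (P k)}

theorem fr_eq_sInf (r n : ℕ) : fr r n = sInf (frSet r n) := rfl

theorem memFrSet {r n : ℕ} {ι : Type*} [Fintype ι] (P : ι → Fin r → Finset (Fin n))
    (h1 : ∀ k, Pairwise (Function.onFun Disjoint (P k)))
    (h2 : ∀ e : Finset (Fin n), e.card = r → ∃! k, e ∈ crossEdges (P k)) :
    Fintype.card ι ∈ frSet r n := by
  classical
  obtain ⟨σ⟩ : Nonempty (Fin (Fintype.card ι) ≃ ι) := ⟨(Fintype.equivFin ι).symm⟩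
  refine ⟨fun k => P (σ k), fun k => h1 _, fun e he => ?_⟩
  obtain ⟨j, hj, hu⟩ := h2 e he
  refine ⟨σ.symm j, by simpa using hj, fun k hk => ?_⟩
  have := hu (σ k) hk
  simp [← this]

theorem frSet_nonempty {r n : ℕ} (hr : 0 < r) : (frSet r n).Nonempty := by
  classical
  refine ⟨_, memFrSet (ι := Fin r → Fin n)
    (fun f i => if StrictMono f then {f i} else ∅) ?_ ?_⟩
  · intro f
    by_cases hf : StrictMono f
    · intro i j hij
      simp only [Function.onFun, if_pos hf]
      exact Finset.disjoint_singleton.2 (fun h => hij (hf.injective h))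
    · intro i j hij
      simp [Function.onFun, if_neg hf]
  · intro e he
    set f₀ : Fin r → Fin n := fun i => e.orderEmbOfFin he i with hf₀
    have hmono : StrictMono f₀ := (e.orderEmbOfFin he).strictMono
    have himg : Finset.image f₀ Finset.univ = e := by
      ext x
      simp only [Finset.mem_image, Finset.mem_univ, true_and]
      constructor
      · rintro ⟨i, rfl⟩; exact e.orderEmbOfFin_mem he i
      · intro hx
        have : x ∈ Set.range (e.orderEmbOfFin he) := by
          rw [Finset.range_orderEmbOfFin]; exact hx
        obtain ⟨i, hi⟩ := this
        exact ⟨i, hi⟩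
    refine ⟨f₀, ⟨f₀, fun i => by simp [if_pos hmono], himg.symm⟩, ?_⟩
    rintro f' ⟨g, hg, hge⟩
    have hf' : StrictMono f' := by
      by_contra hns
      have := hg ⟨0, hr⟩
      simp [if_neg hns] at this
    have hgf : g = f' := by
      funext i
      have := hg i
      simpa [if_pos hf'] using this
    subst hgf
    have hmem : ∀ i, g i ∈ e := by
      intro i
      rw [hge]
      exact Finset.mem_image_of_mem g (Finset.mem_univ i)
    exact (Finset.orderEmbOfFin_unique he hmem hf')

theorem fr_le_card {r n : ℕ} {ι : Type*} [Fintype ι] (P : ι → Fin r → Finset (Fin n))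
    (h1 : ∀ k, Pairwise (Function.onFun Disjoint (P k)))
    (h2 : ∀ e : Finset (Fin n), e.card = r → ∃! k, e ∈ crossEdges (P k)) :
    fr r n ≤ Fintype.card ι :=
  Nat.sInf_le (memFrSet P h1 h2)

theorem frWitness (r n : ℕ) (hr : 0 < r) :
    ∃ P : Fin (fr r n) → Fin r → Finset (Fin n),
      (∀ k, Pairwise (Function.onFun Disjoint (P k))) ∧
      ∀ e : Finset (Fin n), e.card = r → ∃! k, e ∈ crossEdges (P k) :=
  Nat.sInf_mem (frSet_nonempty hr)

def gnSet (n : ℕ) : Set ℕ :=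
  {m | ∃ A B : Fin m → Finset (Fin n), ∃ C D : Fin m → Finset (Fin n),
    (∀ k, Disjoint (A k) (B k)) ∧ (∀ k, Disjoint (C k) (D k)) ∧
    (∀ k, bicliqueEdges (A k) (B k) ⊆ (SimpleGraph.completeGraph (Fin n)).edgeSet) ∧
    (∀ k, bicliqueEdges (C k) (D k) ⊆ (SimpleGraph.completeGraph (Fin n)).edgeSet) ∧
    ∀ p : Sym2 (Fin n) × Sym2 (Fin n),
      p.1 ∈ (SimpleGraph.completeGraph (Fin n)).edgeSet → p.2 ∈ (SimpleGraph.completeGraph (Fin n)).edgeSet →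
      ∃! k, p.1 ∈ bicliqueEdges (A k) (B k) ∧ p.2 ∈ bicliqueEdges (C k) (D k)}

theorem gn_eq_sInf (n : ℕ) : gn n = sInf (gnSet n) := rfl

theorem mem_completeGraph_edgeSet {W : Type*} {e : Sym2 W} :
    e ∈ (SimpleGraph.completeGraph W).edgeSet ↔ ¬ e.IsDiag := by
  induction e with
  | _ x y => simp [SimpleGraph.completeGraph]

theorem biclique_empty_left {B : Finset (Fin 1)} : True := trivial

theorem memGnSet {n : ℕ} {ι : Type*} [Fintype ι]
    (A B C D : ι → Finset (Fin n))
    (hAB : ∀ k, Disjoint (A k) (B k)) (hCD : ∀ k, Disjoint (C k) (D k))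
    (hABe : ∀ k, bicliqueEdges (A k) (B k) ⊆ (SimpleGraph.completeGraph (Fin n)).edgeSet)
    (hCDe : ∀ k, bicliqueEdges (C k) (D k) ⊆ (SimpleGraph.completeGraph (Fin n)).edgeSet)
    (hcov : ∀ p : Sym2 (Fin n) × Sym2 (Fin n),
      p.1 ∈ (SimpleGraph.completeGraph (Fin n)).edgeSet → p.2 ∈ (SimpleGraph.completeGraph (Fin n)).edgeSet →
      ∃! k, p.1 ∈ bicliqueEdges (A k) (B k) ∧ p.2 ∈ bicliqueEdges (C k) (D k)) :
    Fintype.card ι ∈ gnSet n := by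
  classical
  obtain ⟨σ⟩ : Nonempty (Fin (Fintype.card ι) ≃ ι) := ⟨(Fintype.equivFin ι).symm⟩
  refine ⟨fun k => A (σ k), fun k => B (σ k), fun k => C (σ k), fun k => D (σ k),
    fun k => hAB _, fun k => hCD _, fun k => hABe _, fun k => hCDe _, fun p h1 h2 => ?_⟩
  obtain ⟨j, hj, hu⟩ := hcov p h1 h2
  refine ⟨σ.symm j, by simpa using hj, fun k hk => ?_⟩
  have := hu (σ k) hk
  simp [← this]

theorem gnSet_nonempty (n : ℕ) : (gnSet n).Nonempty := by
  classical
  refine ⟨_, memGnSet (ι := (Fin n × Fin n) × (Fin n × Fin n))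
    (fun k => if k.1.1 < k.1.2 ∧ k.2.1 < k.2.2 then {k.1.1} else ∅)
    (fun k => if k.1.1 < k.1.2 ∧ k.2.1 < k.2.2 then {k.1.2} else ∅)
    (fun k => if k.1.1 < k.1.2 ∧ k.2.1 < k.2.2 then {k.2.1} else ∅)
    (fun k => if k.1.1 < k.1.2 ∧ k.2.1 < k.2.2 then {k.2.2} else ∅)
    ?_ ?_ ?_ ?_ ?_⟩
  · intro k
    split
    · next h => exact Finset.disjoint_singleton.2 h.1.ne
    · simp
  · intro k
    split
    · next h => exact Finset.disjoint_singleton.2 h.2.ne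
    · simp
  · intro k
    split
    · next h =>
      rintro e ⟨a, ha, b, hb, rfl⟩
      simp only [Finset.mem_singleton] at ha hb
      subst ha; subst hb
      rw [SimpleGraph.mem_edgeSet]
      exact h.1.ne
    · rintro e ⟨a, ha, -⟩; simp at ha
  · intro k
    split
    · next h =>
      rintro e ⟨a, ha, b, hb, rfl⟩
      simp only [Finset.mem_singleton] at ha hb
      subst ha; subst hb
      rw [SimpleGraph.mem_edgeSet]
      exact h.2.ne
    · rintro e ⟨a, ha, -⟩; simp at ha
  · rintro ⟨e1, e2⟩ h1 h2
    rw [mem_completeGraph_edgeSet] at h1 h2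
    obtain ⟨a, b, hab, rfl⟩ := sym2_rep h1
    obtain ⟨c, d, hcd, rfl⟩ := sym2_rep h2
    refine ⟨((a, b), (c, d)), ?_, ?_⟩
    · refine ⟨?_, ?_⟩ <;>
      · show _ ∈ bicliqueEdges (if _ then _ else _) (if _ then _ else _)
        rw [if_pos ⟨hab, hcd⟩, if_pos ⟨hab, hcd⟩]
        exact biclique_iff.2 (Or.inl ⟨Finset.mem_singleton_self _, Finset.mem_singleton_self _⟩)
    · rintro ⟨⟨a', b'⟩, ⟨c', d'⟩⟩ ⟨hm1, hm2⟩
      by_cases hlt : a' < b' ∧ c' < d'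
      · dsimp only at hm1 hm2
        rw [if_pos hlt, if_pos hlt] at hm1 hm2
        rcases biclique_iff.1 hm1 with ⟨ha, hb⟩ | ⟨ha, hb⟩ <;>
          rcases biclique_iff.1 hm2 with ⟨hc, hd⟩ | ⟨hc, hd⟩ <;>
            simp only [Finset.mem_singleton] at ha hb hc hd
        · subst ha; subst hb; subst hc; subst hd; rfl
        · subst ha; subst hb; subst hc; subst hd
          exact absurd hcd (not_lt.2 hlt.2.le)
        · subst ha; subst hb; subst hc; subst hd
          exact absurd hab (not_lt.2 hlt.1.le)
        · subst ha; subst hb; subst hc; subst hd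
          exact absurd hab (not_lt.2 hlt.1.le)
      · dsimp only at hm1
        rw [if_neg hlt] at hm1
        obtain ⟨x, hx, -⟩ := hm1
        simp at hx

theorem gnWitness (n : ℕ) :
    ∃ A B : Fin (gn n) → Finset (Fin n), ∃ C D : Fin (gn n) → Finset (Fin n),
    (∀ k, Disjoint (A k) (B k)) ∧ (∀ k, Disjoint (C k) (D k)) ∧
    (∀ k, bicliqueEdges (A k) (B k) ⊆ (SimpleGraph.completeGraph (Fin n)).edgeSet) ∧
    (∀ k, bicliqueEdges (C k) (D k) ⊆ (SimpleGraph.completeGraph (Fin n)).edgeSet) ∧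
    ∀ p : Sym2 (Fin n) × Sym2 (Fin n),
      p.1 ∈ (SimpleGraph.completeGraph (Fin n)).edgeSet → p.2 ∈ (SimpleGraph.completeGraph (Fin n)).edgeSet →
      ∃! k, p.1 ∈ bicliqueEdges (A k) (B k) ∧ p.2 ∈ bicliqueEdges (C k) (D k) :=
  Nat.sInf_mem (gnSet_nonempty n)
/-- a family of complete `r`-partite hypergraphs partitioning all `r`-subsets of `S`. -/
def IsCov (r : ℕ) {n : ℕ} (S : Finset (Fin n)) {ι : Type*} (P : ι → Fin r → Finset (Fin n)) :
    Prop :=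
  (∀ k, Pairwise (Function.onFun Disjoint (P k))) ∧ (∀ k i, P k i ⊆ S) ∧
  ∀ e : Finset (Fin n), e ⊆ S → e.card = r → ∃! k, e ∈ crossEdges (P k)

theorem isCov_map {r m n : ℕ} {ι : Type*} (φ : Fin m → Fin n) (hφ : Function.Injective φ)
    {P : ι → Fin r → Finset (Fin m)}
    (h1 : ∀ k, Pairwise (Function.onFun Disjoint (P k)))
    (h2 : ∀ e : Finset (Fin m), e.card = r → ∃! k, e ∈ crossEdges (P k)) :
    IsCov r (Finset.univ.image φ) (fun k i => (P k i).image φ) := by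
  classical
  refine ⟨fun k i j hij => ?_, fun k i => Finset.image_subset_image (Finset.subset_univ _), ?_⟩
  · exact Finset.disjoint_image hφ |>.2 (h1 k hij)
  · intro e hsub hcard
    set e' : Finset (Fin m) := Finset.univ.filter (fun a => φ a ∈ e) with he'
    have himg : Finset.image φ e' = e := by
      apply Finset.Subset.antisymm
      · intro x hx
        obtain ⟨a, ha, rfl⟩ := Finset.mem_image.1 hx
        exact (Finset.mem_filter.1 ha).2
      · intro x hx
        obtain ⟨a, -, rfl⟩ := Finset.mem_image.1 (hsub hx)
        exact Finset.mem_image_of_mem φ (Finset.mem_filter.2 ⟨Finset.mem_univ a, hx⟩)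
    have hcard' : e'.card = r := by
      rw [← hcard, ← himg, Finset.card_image_of_injective _ hφ]
    have key : ∀ k, e ∈ crossEdges (fun i => (P k i).image φ) ↔ e' ∈ crossEdges (P k) := by
      intro k
      constructor
      · rintro ⟨g, hg, hge⟩
        choose h hh1 hh2 using fun i => Finset.mem_image.1 (hg i)
        refine ⟨h, hh1, ?_⟩
        apply Finset.Subset.antisymm
        · intro a ha
          have : φ a ∈ e := (Finset.mem_filter.1 ha).2
          rw [hge] at this
          obtain ⟨i, -, hgi⟩ := Finset.mem_image.1 this
          have : φ (h i) = φ a := by rw [hh2 i, hgi]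
          exact (hφ this) ▸ Finset.mem_image_of_mem h (Finset.mem_univ i)
        · intro a ha
          obtain ⟨i, -, rfl⟩ := Finset.mem_image.1 ha
          refine Finset.mem_filter.2 ⟨Finset.mem_univ _, ?_⟩
          rw [hh2 i, hge]
          exact Finset.mem_image_of_mem g (Finset.mem_univ i)
      · rintro ⟨h, hh, hhe⟩
        refine ⟨φ ∘ h, fun i => Finset.mem_image_of_mem φ (hh i), ?_⟩
        rw [← himg, hhe, Finset.image_image]
    obtain ⟨k, hk, hu⟩ := h2 e' hcard'
    exact ⟨k, (key k).2 hk, fun k' hk' => hu k' ((key k').1 hk')⟩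


theorem fr_mono {r : ℕ} (hr : 0 < r) {n m : ℕ} (hnm : n ≤ m) : fr r n ≤ fr r m := by
  classical
  obtain ⟨P, h1, h2⟩ := frWitness r m hr
  set φ : Fin n → Fin m := Fin.castLE hnm with hφdef
  have hφ : Function.Injective φ := Fin.castLE_injective hnm
  set Q : Fin (fr r m) → Fin r → Finset (Fin n) :=
    fun k i => Finset.univ.filter (fun x => φ x ∈ P k i) with hQ
  rw [fr_eq_sInf]
  refine Nat.sInf_le ⟨Q, fun k i j hij => ?_, ?_⟩
  · show Disjoint (Q k i) (Q k j)
    rw [Finset.disjoint_left]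
    intro x hx hx'
    exact Finset.disjoint_left.1 (h1 k hij) (Finset.mem_filter.1 hx).2 (Finset.mem_filter.1 hx').2
  · intro e hcard
    set E : Finset (Fin m) := e.image φ with hE
    have hEcard : E.card = r := by rw [hE, Finset.card_image_of_injective _ hφ, hcard]
    have key : ∀ k, e ∈ crossEdges (Q k) ↔ E ∈ crossEdges (P k) := by
      intro k
      constructor
      · rintro ⟨g, hg, rfl⟩
        refine ⟨φ ∘ g, fun i => (Finset.mem_filter.1 (hg i)).2, ?_⟩
        rw [hE, Finset.image_image]
      · rintro ⟨g, hg, hge⟩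
        have hmem : ∀ i, ∃ a ∈ e, φ a = g i := by
          intro i
          have : g i ∈ E := by
            rw [hge]; exact Finset.mem_image_of_mem g (Finset.mem_univ i)
          exact Finset.mem_image.1 this
        choose h hh1 hh2 using hmem
        refine ⟨h, fun i => Finset.mem_filter.2 ⟨Finset.mem_univ _, by rw [hh2 i]; exact hg i⟩, ?_⟩
        apply Finset.Subset.antisymm
        · intro x hx
          have : φ x ∈ E := Finset.mem_image_of_mem φ hx
          rw [hge] at this
          obtain ⟨i, -, hgi⟩ := Finset.mem_image.1 this
          have : φ (h i) = φ x := by rw [hh2 i, hgi]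
          exact (hφ this) ▸ Finset.mem_image_of_mem h (Finset.mem_univ i)
        · intro x hx
          obtain ⟨i, -, rfl⟩ := Finset.mem_image.1 hx
          exact hh1 i
    obtain ⟨k, hk, hu⟩ := h2 E hEcard
    exact ⟨k, (key k).2 hk, fun k' hk' => hu k' ((key k').1 hk')⟩

theorem fr_four_eq_zero {n : ℕ} (hn : n ≤ 3) : fr 4 n = 0 := by
  classical
  have : (0 : ℕ) ∈ frSet 4 n := by
    refine ⟨fun k => Fin.elim0 k, fun k => Fin.elim0 k, fun e he => ?_⟩
    exfalso
    have := Finset.card_le_univ e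
    rw [he] at this
    simp only [Finset.card_univ, Fintype.card_fin] at this
    omega
  have := Nat.sInf_le this
  rw [fr_eq_sInf]
  omega

theorem pairwise3 {V : Type*} {a b c : Finset V} (hab : Disjoint a b) (hac : Disjoint a c)
    (hbc : Disjoint b c) : Pairwise (Function.onFun Disjoint ![a, b, c]) := by
  intro i j hij
  fin_cases i <;> fin_cases j <;>
    simp only [Function.onFun, Matrix.cons_val_zero, Matrix.cons_val_one, Matrix.head_cons,
      Matrix.cons_val_two, Matrix.tail_cons, Fin.mk_zero, Fin.mk_one] <;>
    first
      | exact absurd rfl hij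
      | assumption
      | exact hab.symm
      | exact hac.symm
      | exact hbc.symm

theorem pairwise4 {V : Type*} {a b c d : Finset V} (hab : Disjoint a b) (hac : Disjoint a c)
    (had : Disjoint a d) (hbc : Disjoint b c) (hbd : Disjoint b d) (hcd : Disjoint c d) :
    Pairwise (Function.onFun Disjoint ![a, b, c, d]) := by
  intro i j hij
  fin_cases i <;> fin_cases j <;>
    simp only [Function.onFun, Matrix.cons_val_zero, Matrix.cons_val_one, Matrix.head_cons,
      Matrix.cons_val_two, Matrix.tail_cons, Matrix.cons_val_three] <;>
    first
      | exact absurd rfl hij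
      | assumption
      | exact hab.symm
      | exact hac.symm
      | exact had.symm
      | exact hbc.symm
      | exact hbd.symm
      | exact hcd.symm

/-- the middle-element 3-cover of the triples inside `X`, indexed by all of `Fin n`. -/
noncomputable def midFam {n : ℕ} (X : Finset (Fin n)) : Fin n → Fin 3 → Finset (Fin n) :=
  fun s => if s ∈ X then ![X.filter (· < s), {s}, X.filter (s < ·)] else ![∅, ∅, ∅]

theorem cov3 {n : ℕ} (X : Finset (Fin n)) : IsCov 3 X (midFam X) := by
  classical
  have hdisj : ∀ s, Pairwise (Function.onFun Disjoint (midFam X s)) := by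
    intro s
    unfold midFam
    split
    · next hs =>
      refine pairwise3 ?_ ?_ ?_
      · rw [Finset.disjoint_left]; intro x hx hx'
        rw [Finset.mem_filter] at hx
        rw [Finset.mem_singleton] at hx'
        exact absurd hx.2 (hx' ▸ lt_irrefl x)
      · rw [Finset.disjoint_left]; intro x hx hx'
        rw [Finset.mem_filter] at hx hx'
        exact absurd (hx.2.trans hx'.2) (lt_irrefl x)
      · rw [Finset.disjoint_left]; intro x hx hx'
        rw [Finset.mem_singleton] at hx
        rw [Finset.mem_filter] at hx'
        exact absurd hx'.2 (hx ▸ lt_irrefl x)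
    · refine pairwise3 ?_ ?_ ?_ <;> simp
  refine ⟨hdisj, ?_, ?_⟩
  · intro s i
    unfold midFam
    split
    · next hs =>
      fin_cases i <;>
        simp only [Matrix.cons_val_zero, Matrix.cons_val_one, Matrix.head_cons,
          Matrix.cons_val_two, Matrix.tail_cons]
      · exact Finset.filter_subset _ _
      · exact Finset.singleton_subset_iff.2 hs
      · exact Finset.filter_subset _ _
    · fin_cases i <;> simp
  · intro e hsub hcard
    set f := e.orderEmbOfFin hcard with hf
    have hmem : ∀ i, f i ∈ e := fun i => e.orderEmbOfFin_mem hcard i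
    have hrange : ∀ x ∈ e, ∃ i, f i = x := by
      intro x hx
      have : x ∈ Set.range (e.orderEmbOfFin hcard) := by
        rw [Finset.range_orderEmbOfFin]; exact hx
      exact this
    have hlt01 : f 0 < f 1 := (e.orderEmbOfFin hcard).strictMono (by decide)
    have hlt12 : f 1 < f 2 := (e.orderEmbOfFin hcard).strictMono (by decide)
    have hbX : f 1 ∈ X := hsub (hmem 1)
    have hmemb : e ∈ crossEdges (midFam X (f 1)) := by
      rw [cross_iff (hdisj _) hcard]
      intro i
      unfold midFam
      rw [if_pos hbX]
      fin_cases i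
      · exact ⟨f 0, hmem 0, Finset.mem_filter.2 ⟨hsub (hmem 0), hlt01⟩⟩
      · exact ⟨f 1, hmem 1, by simp⟩
      · exact ⟨f 2, hmem 2, Finset.mem_filter.2 ⟨hsub (hmem 2), hlt12⟩⟩
    refine ⟨f 1, hmemb, ?_⟩
    intro s hs
    rw [cross_iff (hdisj _) hcard] at hs
    by_cases hsX : s ∈ X
    · obtain ⟨x, hx, hx'⟩ := hs 0
      obtain ⟨y, hy, hy'⟩ := hs 1
      obtain ⟨z, hz, hz'⟩ := hs 2
      unfold midFam at hx' hy' hz'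
      rw [if_pos hsX] at hx' hy' hz'
      simp only [Matrix.cons_val_zero, Matrix.cons_val_one, Matrix.head_cons,
        Matrix.cons_val_two, Matrix.tail_cons, Finset.mem_filter,
        Finset.mem_singleton] at hx' hy' hz'
      subst hy'
      obtain ⟨i, rfl⟩ := hrange y hy
      obtain ⟨ix, rfl⟩ := hrange x hx
      obtain ⟨iz, rfl⟩ := hrange z hz
      have hmono := (e.orderEmbOfFin hcard).monotone
      -- f ix < f i and f i < f iz
      have h1 : f 0 ≤ f ix := hmono (Fin.zero_le ix)
      have h2 : f iz ≤ f 2 := hmono (Fin.le_last iz)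
      have hi0 : i ≠ 0 := by
        intro h
        subst h
        exact absurd (h1.trans_lt hx'.2) (lt_irrefl _)
      have hi2 : i ≠ 2 := by
        intro h
        subst h
        exact absurd (hz'.2.trans_le h2) (lt_irrefl _)
      have : i = 1 := by
        fin_cases i
        · exact absurd rfl hi0
        · rfl
        · exact absurd rfl hi2
      rw [this]
    · obtain ⟨x, hx, hx'⟩ := hs 0
      unfold midFam at hx'
      rw [if_neg hsX] at hx'
      simp at hx'

section Combine
open Function

variable {n : ℕ} {X Y : Finset (Fin n)}
variable {ι1 ι2 ι3 ι4 ιg : Type*}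
variable {P1 : ι1 → Fin 4 → Finset (Fin n)} {P2 : ι2 → Fin 4 → Finset (Fin n)}
variable {Q1 : ι3 → Fin 3 → Finset (Fin n)} {Q2 : ι4 → Fin 3 → Finset (Fin n)}
variable {A B C D : ιg → Finset (Fin n)}

/-- The combined family of complete 4-partite hypergraphs. -/
def combFam (P1 : ι1 → Fin 4 → Finset (Fin n)) (P2 : ι2 → Fin 4 → Finset (Fin n))
    (Q1 : ι3 → Fin 3 → Finset (Fin n)) (Q2 : ι4 → Fin 3 → Finset (Fin n))
    (A B C D : ιg → Finset (Fin n)) (X Y : Finset (Fin n)) :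
    (ι1 ⊕ (ι2 ⊕ (ι3 ⊕ (ι4 ⊕ ιg)))) → Fin 4 → Finset (Fin n) :=
  Sum.elim P1 <| Sum.elim P2 <| Sum.elim (fun k => ![Q1 k 0, Q1 k 1, Q1 k 2, Y]) <|
    Sum.elim (fun k => ![X, Q2 k 0, Q2 k 1, Q2 k 2]) (fun k => ![A k, B k, C k, D k])

set_option maxHeartbeats 1000000 in
theorem combine (hXY : Disjoint X Y) (hU : X ∪ Y = Finset.univ)
    (h1 : IsCov 4 X P1) (h2 : IsCov 4 Y P2) (h3 : IsCov 3 X Q1) (h4 : IsCov 3 Y Q2)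
    (hA : ∀ k, A k ⊆ X) (hB : ∀ k, B k ⊆ X) (hC : ∀ k, C k ⊆ Y) (hD : ∀ k, D k ⊆ Y)
    (hAB : ∀ k, Disjoint (A k) (B k)) (hCD : ∀ k, Disjoint (C k) (D k))
    (hgcov : ∀ a b c d : Fin n, a ∈ X → b ∈ X → a ≠ b → c ∈ Y → d ∈ Y → c ≠ d →
      ∃! k, ((a ∈ A k ∧ b ∈ B k) ∨ (b ∈ A k ∧ a ∈ B k)) ∧
            ((c ∈ C k ∧ d ∈ D k) ∨ (d ∈ C k ∧ c ∈ D k))) :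
    (∀ j, Pairwise (Function.onFun Disjoint (combFam P1 P2 Q1 Q2 A B C D X Y j))) ∧
    (∀ e : Finset (Fin n), e.card = 4 →
      ∃! j, e ∈ crossEdges (combFam P1 P2 Q1 Q2 A B C D X Y j)) := by
  classical
  have hd3 : ∀ k, Pairwise (Function.onFun Disjoint ![Q1 k 0, Q1 k 1, Q1 k 2, Y]) := by
    intro k
    have d01 : Disjoint (Q1 k 0) (Q1 k 1) := h3.1 k (by decide)
    have d02 : Disjoint (Q1 k 0) (Q1 k 2) := h3.1 k (by decide)
    have d12 : Disjoint (Q1 k 1) (Q1 k 2) := h3.1 k (by decide)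
    exact pairwise4 d01 d02 (hXY.mono_left (h3.2.1 k 0)) d12
      (hXY.mono_left (h3.2.1 k 1)) (hXY.mono_left (h3.2.1 k 2))
  have hd4 : ∀ k, Pairwise (Function.onFun Disjoint ![X, Q2 k 0, Q2 k 1, Q2 k 2]) := by
    intro k
    have d01 : Disjoint (Q2 k 0) (Q2 k 1) := h4.1 k (by decide)
    have d02 : Disjoint (Q2 k 0) (Q2 k 2) := h4.1 k (by decide)
    have d12 : Disjoint (Q2 k 1) (Q2 k 2) := h4.1 k (by decide)
    exact pairwise4 (hXY.mono_right (h4.2.1 k 0)) (hXY.mono_right (h4.2.1 k 1))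
      (hXY.mono_right (h4.2.1 k 2)) d01 d02 d12
  have hdg : ∀ k, Pairwise (Function.onFun Disjoint ![A k, B k, C k, D k]) := by
    intro k
    exact pairwise4 (hAB k) ((hXY.mono (hA k) (hC k))) ((hXY.mono (hA k) (hD k)))
      ((hXY.mono (hB k) (hC k))) ((hXY.mono (hB k) (hD k))) (hCD k)
  have hdall : ∀ j, Pairwise (Function.onFun Disjoint (combFam P1 P2 Q1 Q2 A B C D X Y j)) := by
    rintro (k | k | k | k | k)
    · exact h1.1 k
    · exact h2.1 k
    · exact hd3 k
    · exact hd4 k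
    · exact hdg k
  refine ⟨hdall, ?_⟩
  intro e hcard
  set u : Finset (Fin n) := e ∩ X with hu
  set v : Finset (Fin n) := e ∩ Y with hv
  have huv : u ∪ v = e := by
    rw [hu, hv, ← Finset.inter_union_distrib_left, hU, Finset.inter_univ]
  have hduv : Disjoint u v := hXY.mono Finset.inter_subset_right Finset.inter_subset_right
  have hcards : u.card + v.card = 4 := by
    rw [← Finset.card_union_of_disjoint hduv, huv, hcard]
  have huX : u ⊆ X := Finset.inter_subset_right
  have hvY : v ⊆ Y := Finset.inter_subset_right
  have hue : u ⊆ e := Finset.inter_subset_left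
  have hve : v ⊆ e := Finset.inter_subset_left
  -- characterizations of membership in each class
  have HP1 : ∀ k, e ∈ crossEdges (P1 k) → u.card = 4 := by
    intro k h
    have hsub : e ⊆ X := by
      intro x hx
      obtain ⟨i, hi⟩ := cross_subset h x hx
      exact h1.2.1 k i hi
    have : u = e := by rw [hu, Finset.inter_eq_left.2 hsub]
    rw [this, hcard]
  have HP2 : ∀ k, e ∈ crossEdges (P2 k) → u.card = 0 := by
    intro k h
    have hsub : e ⊆ Y := by
      intro x hx
      obtain ⟨i, hi⟩ := cross_subset h x hx
      exact h2.2.1 k i hi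
    have : v = e := by rw [hv, Finset.inter_eq_left.2 hsub]
    have : v.card = 4 := by rw [this, hcard]
    omega
  have HQ1 : ∀ k, e ∈ crossEdges ![Q1 k 0, Q1 k 1, Q1 k 2, Y] ↔
      (u.card = 3 ∧ u ∈ crossEdges (Q1 k)) := by
    intro k
    rw [cross_iff (hd3 k) hcard]
    constructor
    · intro h
      obtain ⟨x0, hx0e, hx0⟩ := h 0
      obtain ⟨x1, hx1e, hx1⟩ := h 1
      obtain ⟨x2, hx2e, hx2⟩ := h 2
      obtain ⟨x3, hx3e, hx3⟩ := h 3
      simp only [Matrix.cons_val_zero, Matrix.cons_val_one, Matrix.head_cons,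
        Matrix.cons_val_two, Matrix.tail_cons, Matrix.cons_val_three] at hx0 hx1 hx2 hx3
      have hx0u : x0 ∈ u := Finset.mem_inter.2 ⟨hx0e, h3.2.1 k 0 hx0⟩
      have hx1u : x1 ∈ u := Finset.mem_inter.2 ⟨hx1e, h3.2.1 k 1 hx1⟩
      have hx2u : x2 ∈ u := Finset.mem_inter.2 ⟨hx2e, h3.2.1 k 2 hx2⟩
      have hne01 : x0 ≠ x1 := fun h => Finset.disjoint_left.1 (h3.1 k (by decide : (0 : Fin 3) ≠ 1)) hx0 (h ▸ hx1)
      have hne02 : x0 ≠ x2 := fun h => Finset.disjoint_left.1 (h3.1 k (by decide : (0 : Fin 3) ≠ 2)) hx0 (h ▸ hx2)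
      have hne12 : x1 ≠ x2 := fun h => Finset.disjoint_left.1 (h3.1 k (by decide : (1 : Fin 3) ≠ 2)) hx1 (h ▸ hx2)
      have hsub3 : ({x0, x1, x2} : Finset (Fin n)) ⊆ u := by
        intro x hx
        simp only [Finset.mem_insert, Finset.mem_singleton] at hx
        rcases hx with rfl | rfl | rfl <;> assumption
      have hc3 : ({x0, x1, x2} : Finset (Fin n)).card = 3 := by
        rw [Finset.card_insert_of_notMem (by simp [hne01, hne02]),
          Finset.card_insert_of_notMem (by simp [hne12]), Finset.card_singleton]
      have h3le : 3 ≤ u.card := hc3 ▸ Finset.card_le_card hsub3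
      have hvpos : 1 ≤ v.card :=
        Finset.card_pos.2 ⟨x3, Finset.mem_inter.2 ⟨hx3e, hx3⟩⟩
      have hu3 : u.card = 3 := by omega
      refine ⟨hu3, ?_⟩
      rw [cross_iff (h3.1 k) hu3]
      intro i
      fin_cases i
      · exact ⟨x0, hx0u, hx0⟩
      · exact ⟨x1, hx1u, hx1⟩
      · exact ⟨x2, hx2u, hx2⟩
    · rintro ⟨hu3, hcr⟩
      rw [cross_iff (h3.1 k) hu3] at hcr
      intro i
      fin_cases i <;>
        simp only [Matrix.cons_val_zero, Matrix.cons_val_one, Matrix.head_cons,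
          Matrix.cons_val_two, Matrix.tail_cons, Matrix.cons_val_three]
      · obtain ⟨x, hxu, hx⟩ := hcr 0
        exact ⟨x, hue hxu, hx⟩
      · obtain ⟨x, hxu, hx⟩ := hcr 1
        exact ⟨x, hue hxu, hx⟩
      · obtain ⟨x, hxu, hx⟩ := hcr 2
        exact ⟨x, hue hxu, hx⟩
      · have : 0 < v.card := by omega
        obtain ⟨y, hy⟩ := Finset.card_pos.1 this
        exact ⟨y, hve hy, (Finset.mem_inter.1 hy).2⟩
  have HQ2 : ∀ k, e ∈ crossEdges ![X, Q2 k 0, Q2 k 1, Q2 k 2] ↔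
      (v.card = 3 ∧ v ∈ crossEdges (Q2 k)) := by
    intro k
    rw [cross_iff (hd4 k) hcard]
    constructor
    · intro h
      obtain ⟨x0, hx0e, hx0⟩ := h 0
      obtain ⟨x1, hx1e, hx1⟩ := h 1
      obtain ⟨x2, hx2e, hx2⟩ := h 2
      obtain ⟨x3, hx3e, hx3⟩ := h 3
      simp only [Matrix.cons_val_zero, Matrix.cons_val_one, Matrix.head_cons,
        Matrix.cons_val_two, Matrix.tail_cons, Matrix.cons_val_three] at hx0 hx1 hx2 hx3
      have hx1v : x1 ∈ v := Finset.mem_inter.2 ⟨hx1e, h4.2.1 k 0 hx1⟩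
      have hx2v : x2 ∈ v := Finset.mem_inter.2 ⟨hx2e, h4.2.1 k 1 hx2⟩
      have hx3v : x3 ∈ v := Finset.mem_inter.2 ⟨hx3e, h4.2.1 k 2 hx3⟩
      have hne12 : x1 ≠ x2 := fun h => Finset.disjoint_left.1 (h4.1 k (by decide : (0 : Fin 3) ≠ 1)) hx1 (h ▸ hx2)
      have hne13 : x1 ≠ x3 := fun h => Finset.disjoint_left.1 (h4.1 k (by decide : (0 : Fin 3) ≠ 2)) hx1 (h ▸ hx3)
      have hne23 : x2 ≠ x3 := fun h => Finset.disjoint_left.1 (h4.1 k (by decide : (1 : Fin 3) ≠ 2)) hx2 (h ▸ hx3)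
      have hsub3 : ({x1, x2, x3} : Finset (Fin n)) ⊆ v := by
        intro x hx
        simp only [Finset.mem_insert, Finset.mem_singleton] at hx
        rcases hx with rfl | rfl | rfl <;> assumption
      have hc3 : ({x1, x2, x3} : Finset (Fin n)).card = 3 := by
        rw [Finset.card_insert_of_notMem (by simp [hne12, hne13]),
          Finset.card_insert_of_notMem (by simp [hne23]), Finset.card_singleton]
      have h3le : 3 ≤ v.card := hc3 ▸ Finset.card_le_card hsub3
      have hupos : 1 ≤ u.card :=
        Finset.card_pos.2 ⟨x0, Finset.mem_inter.2 ⟨hx0e, hx0⟩⟩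
      have hv3 : v.card = 3 := by omega
      refine ⟨hv3, ?_⟩
      rw [cross_iff (h4.1 k) hv3]
      intro i
      fin_cases i
      · exact ⟨x1, hx1v, hx1⟩
      · exact ⟨x2, hx2v, hx2⟩
      · exact ⟨x3, hx3v, hx3⟩
    · rintro ⟨hv3, hcr⟩
      rw [cross_iff (h4.1 k) hv3] at hcr
      intro i
      fin_cases i <;>
        simp only [Matrix.cons_val_zero, Matrix.cons_val_one, Matrix.head_cons,
          Matrix.cons_val_two, Matrix.tail_cons, Matrix.cons_val_three]
      · have : 0 < u.card := by omega
        obtain ⟨y, hy⟩ := Finset.card_pos.1 this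
        exact ⟨y, hue hy, (Finset.mem_inter.1 hy).2⟩
      · obtain ⟨x, hxv, hx⟩ := hcr 0
        exact ⟨x, hve hxv, hx⟩
      · obtain ⟨x, hxv, hx⟩ := hcr 1
        exact ⟨x, hve hxv, hx⟩
      · obtain ⟨x, hxv, hx⟩ := hcr 2
        exact ⟨x, hve hxv, hx⟩
  have Hg : ∀ k, e ∈ crossEdges ![A k, B k, C k, D k] ↔
      ((∃ x ∈ u, x ∈ A k) ∧ (∃ x ∈ u, x ∈ B k) ∧ (∃ x ∈ v, x ∈ C k) ∧ (∃ x ∈ v, x ∈ D k)) := by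
    intro k
    rw [cross_iff (hdg k) hcard]
    constructor
    · intro h
      obtain ⟨x0, hx0e, hx0⟩ := h 0
      obtain ⟨x1, hx1e, hx1⟩ := h 1
      obtain ⟨x2, hx2e, hx2⟩ := h 2
      obtain ⟨x3, hx3e, hx3⟩ := h 3
      simp only [Matrix.cons_val_zero, Matrix.cons_val_one, Matrix.head_cons,
        Matrix.cons_val_two, Matrix.tail_cons, Matrix.cons_val_three] at hx0 hx1 hx2 hx3
      exact ⟨⟨x0, Finset.mem_inter.2 ⟨hx0e, hA k hx0⟩, hx0⟩,
        ⟨x1, Finset.mem_inter.2 ⟨hx1e, hB k hx1⟩, hx1⟩,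
        ⟨x2, Finset.mem_inter.2 ⟨hx2e, hC k hx2⟩, hx2⟩,
        ⟨x3, Finset.mem_inter.2 ⟨hx3e, hD k hx3⟩, hx3⟩⟩
    · rintro ⟨⟨x0, hx0u, hx0⟩, ⟨x1, hx1u, hx1⟩, ⟨x2, hx2v, hx2⟩, ⟨x3, hx3v, hx3⟩⟩
      intro i
      fin_cases i <;>
        simp only [Matrix.cons_val_zero, Matrix.cons_val_one, Matrix.head_cons,
          Matrix.cons_val_two, Matrix.tail_cons, Matrix.cons_val_three]
      · exact ⟨x0, hue hx0u, hx0⟩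
      · exact ⟨x1, hue hx1u, hx1⟩
      · exact ⟨x2, hve hx2v, hx2⟩
      · exact ⟨x3, hve hx3v, hx3⟩
  have Hg2 : ∀ k, e ∈ crossEdges ![A k, B k, C k, D k] → u.card = 2 := by
    intro k h
    obtain ⟨⟨x0, hx0u, hx0⟩, ⟨x1, hx1u, hx1⟩, ⟨x2, hx2v, hx2⟩, ⟨x3, hx3v, hx3⟩⟩ := (Hg k).1 h
    have hne01 : x0 ≠ x1 := fun h => Finset.disjoint_left.1 (hAB k) hx0 (h ▸ hx1)
    have hne23 : x2 ≠ x3 := fun h => Finset.disjoint_left.1 (hCD k) hx2 (h ▸ hx3)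
    have h2u : 1 < u.card := Finset.one_lt_card.2 ⟨x0, hx0u, x1, hx1u, hne01⟩
    have h2v : 1 < v.card := Finset.one_lt_card.2 ⟨x2, hx2v, x3, hx3v, hne23⟩
    omega
  -- main case split on |e ∩ X|
  obtain hc0 | hc1 | hc2 | hc3 | hc4 :
      u.card = 0 ∨ u.card = 1 ∨ u.card = 2 ∨ u.card = 3 ∨ u.card = 4 := by omega
  · -- e ⊆ Y
    have hveq : v = e := by
      apply Finset.eq_of_subset_of_card_le hve
      omega
    have hsub : e ⊆ Y := hveq ▸ hvY
    obtain ⟨k, hk, hku⟩ := h2.2.2 e hsub hcard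
    refine ⟨Sum.inr (Sum.inl k), hk, ?_⟩
    rintro (k' | k' | k' | k' | k') hj
    · exact absurd (HP1 k' hj) (by omega)
    · exact congrArg (fun t => Sum.inr (Sum.inl t)) (hku k' hj)
    · exact absurd ((HQ1 k').1 hj).1 (by omega)
    · exact absurd ((HQ2 k').1 hj).1 (by omega)
    · exact absurd (Hg2 k' hj) (by omega)
  · -- |e ∩ X| = 1
    have hv3 : v.card = 3 := by omega
    obtain ⟨k, hk, hku⟩ := h4.2.2 v hvY hv3
    refine ⟨Sum.inr (Sum.inr (Sum.inr (Sum.inl k))), (HQ2 k).2 ⟨hv3, hk⟩, ?_⟩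
    rintro (k' | k' | k' | k' | k') hj
    · exact absurd (HP1 k' hj) (by omega)
    · exact absurd (HP2 k' hj) (by omega)
    · exact absurd ((HQ1 k').1 hj).1 (by omega)
    · exact congrArg (fun t => Sum.inr (Sum.inr (Sum.inr (Sum.inl t))))
        (hku k' ((HQ2 k').1 hj).2)
    · exact absurd (Hg2 k' hj) (by omega)
  · -- |e ∩ X| = 2
    have hv2 : v.card = 2 := by omega
    obtain ⟨a, b, hab, habu⟩ := Finset.card_eq_two.1 hc2
    obtain ⟨c, d, hcd, hcdv⟩ := Finset.card_eq_two.1 hv2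
    have haX : a ∈ X := huX (habu ▸ Finset.mem_insert_self a {b})
    have hbX : b ∈ X := huX (habu ▸ Finset.mem_insert_of_mem (Finset.mem_singleton_self b))
    have hcY : c ∈ Y := hvY (hcdv ▸ Finset.mem_insert_self c {d})
    have hdY : d ∈ Y := hvY (hcdv ▸ Finset.mem_insert_of_mem (Finset.mem_singleton_self d))
    have pair_iff : ∀ (S T : Finset (Fin n)), Disjoint S T → ∀ x y : Fin n,
        (((x ∈ S ∨ y ∈ S) ∧ (x ∈ T ∨ y ∈ T)) ↔ ((x ∈ S ∧ y ∈ T) ∨ (y ∈ S ∧ x ∈ T))) := by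
      intro S T hST x y
      have hx : ¬(x ∈ S ∧ x ∈ T) := fun ⟨h, h'⟩ => Finset.disjoint_left.1 hST h h'
      have hy : ¬(y ∈ S ∧ y ∈ T) := fun ⟨h, h'⟩ => Finset.disjoint_left.1 hST h h'
      tauto
    have key : ∀ k, e ∈ crossEdges ![A k, B k, C k, D k] ↔
        (((a ∈ A k ∧ b ∈ B k) ∨ (b ∈ A k ∧ a ∈ B k)) ∧
         ((c ∈ C k ∧ d ∈ D k) ∨ (d ∈ C k ∧ c ∈ D k))) := by
      intro k
      rw [Hg k]
      have e1 : (∃ x ∈ u, x ∈ A k) ↔ (a ∈ A k ∨ b ∈ A k) := by rw [habu]; simp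
      have e2 : (∃ x ∈ u, x ∈ B k) ↔ (a ∈ B k ∨ b ∈ B k) := by rw [habu]; simp
      have e3 : (∃ x ∈ v, x ∈ C k) ↔ (c ∈ C k ∨ d ∈ C k) := by rw [hcdv]; simp
      have e4 : (∃ x ∈ v, x ∈ D k) ↔ (c ∈ D k ∨ d ∈ D k) := by rw [hcdv]; simp
      rw [e1, e2, e3, e4]
      have p1 := pair_iff (A k) (B k) (hAB k) a b
      have p2 := pair_iff (C k) (D k) (hCD k) c d
      constructor
      · rintro ⟨hA', hB', hC', hD'⟩
        exact ⟨p1.1 ⟨hA', hB'⟩, p2.1 ⟨hC', hD'⟩⟩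
      · rintro ⟨hL, hR⟩
        obtain ⟨hA', hB'⟩ := p1.2 hL
        obtain ⟨hC', hD'⟩ := p2.2 hR
        exact ⟨hA', hB', hC', hD'⟩
    obtain ⟨k, hk, hku⟩ := hgcov a b c d haX hbX hab hcY hdY hcd
    refine ⟨Sum.inr (Sum.inr (Sum.inr (Sum.inr k))), (key k).2 hk, ?_⟩
    rintro (k' | k' | k' | k' | k') hj
    · exact absurd (HP1 k' hj) (by omega)
    · exact absurd (HP2 k' hj) (by omega)
    · exact absurd ((HQ1 k').1 hj).1 (by omega)
    · exact absurd ((HQ2 k').1 hj).1 (by omega)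
    · exact congrArg (fun t => Sum.inr (Sum.inr (Sum.inr (Sum.inr t))))
        (hku k' ((key k').1 hj))
  · -- |e ∩ X| = 3
    obtain ⟨k, hk, hku⟩ := h3.2.2 u huX hc3
    refine ⟨Sum.inr (Sum.inr (Sum.inl k)), (HQ1 k).2 ⟨hc3, hk⟩, ?_⟩
    rintro (k' | k' | k' | k' | k') hj
    · exact absurd (HP1 k' hj) (by omega)
    · exact absurd (HP2 k' hj) (by omega)
    · exact congrArg (fun t => Sum.inr (Sum.inr (Sum.inl t)))
        (hku k' ((HQ1 k').1 hj).2)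
    · exact absurd ((HQ2 k').1 hj).1 (by omega)
    · exact absurd (Hg2 k' hj) (by omega)
  · -- e ⊆ X
    have hueq : u = e := by
      apply Finset.eq_of_subset_of_card_le hue
      omega
    have hsub : e ⊆ X := hueq ▸ huX
    obtain ⟨k, hk, hku⟩ := h1.2.2 e hsub hcard
    refine ⟨Sum.inl k, hk, ?_⟩
    rintro (k' | k' | k' | k' | k') hj
    · exact congrArg Sum.inl (hku k' hj)
    · exact absurd (HP2 k' hj) (by omega)
    · exact absurd ((HQ1 k').1 hj).1 (by omega)
    · exact absurd ((HQ2 k').1 hj).1 (by omega)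
    · exact absurd (Hg2 k' hj) (by omega)

end Combine

theorem step (m : ℕ) : fr 4 (2 * m) ≤ 2 * fr 4 m + gn m + 4 * m := by
  classical
  have hφinj : Function.Injective (fun a : Fin m => (⟨a.val, by omega⟩ : Fin (2 * m))) := by
    intro a b h
    simpa [Fin.ext_iff] using h
  have hψinj : Function.Injective (fun a : Fin m => (⟨m + a.val, by omega⟩ : Fin (2 * m))) := by
    intro a b h
    simp only [Fin.mk.injEq] at h
    exact Fin.ext (by omega)
  set φ : Fin m → Fin (2 * m) := fun a => ⟨a.val, by omega⟩ with hφ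
  set ψ : Fin m → Fin (2 * m) := fun a => ⟨m + a.val, by omega⟩ with hψ
  set X : Finset (Fin (2 * m)) := Finset.univ.image φ with hX
  set Y : Finset (Fin (2 * m)) := Finset.univ.image ψ with hY
  have hmemX : ∀ x : Fin (2 * m), x ∈ X ↔ x.val < m := by
    intro x
    constructor
    · intro hx
      obtain ⟨a, -, rfl⟩ := Finset.mem_image.1 hx
      exact a.isLt
    · intro hx
      exact Finset.mem_image.2 ⟨⟨x.val, hx⟩, Finset.mem_univ _, rfl⟩
  have hmemY : ∀ x : Fin (2 * m), x ∈ Y ↔ m ≤ x.val := by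
    intro x
    constructor
    · intro hx
      obtain ⟨a, -, rfl⟩ := Finset.mem_image.1 hx
      exact Nat.le_add_right m a.val
    · intro hx
      exact Finset.mem_image.2 ⟨⟨x.val - m, by omega⟩, Finset.mem_univ _,
        Fin.ext (by show m + (x.val - m) = x.val; omega)⟩
  have hXY : Disjoint X Y := by
    rw [Finset.disjoint_left]
    intro x hx hy
    rw [hmemX] at hx
    rw [hmemY] at hy
    omega
  have hU : X ∪ Y = Finset.univ := by
    ext x
    simp only [Finset.mem_union, Finset.mem_univ, iff_true]
    rcases lt_or_ge x.val m with h | h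
    · exact Or.inl ((hmemX x).2 h)
    · exact Or.inr ((hmemY x).2 h)
  obtain ⟨P, hP1, hP2⟩ := frWitness 4 m (by norm_num)
  have h1 : IsCov 4 X (fun k i => (P k i).image φ) := isCov_map φ hφinj hP1 hP2
  have h2 : IsCov 4 Y (fun k i => (P k i).image ψ) := isCov_map ψ hψinj hP1 hP2
  have h3 := cov3 X
  have h4 := cov3 Y
  obtain ⟨A₀, B₀, C₀, D₀, hAB₀, hCD₀, hABe, hCDe, hgc⟩ := gnWitness m
  set A : Fin (gn m) → Finset (Fin (2 * m)) := fun k => (A₀ k).image φ with hA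
  set B : Fin (gn m) → Finset (Fin (2 * m)) := fun k => (B₀ k).image φ with hB
  set C : Fin (gn m) → Finset (Fin (2 * m)) := fun k => (C₀ k).image ψ with hC
  set D : Fin (gn m) → Finset (Fin (2 * m)) := fun k => (D₀ k).image ψ with hD
  have hgcov : ∀ a b c d : Fin (2 * m), a ∈ X → b ∈ X → a ≠ b → c ∈ Y → d ∈ Y → c ≠ d →
      ∃! k, ((a ∈ A k ∧ b ∈ B k) ∨ (b ∈ A k ∧ a ∈ B k)) ∧
            ((c ∈ C k ∧ d ∈ D k) ∨ (d ∈ C k ∧ c ∈ D k)) := by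
    intro a b c d haX hbX hab hcY hdY hcd
    obtain ⟨a₀, -, rfl⟩ := Finset.mem_image.1 haX
    obtain ⟨b₀, -, rfl⟩ := Finset.mem_image.1 hbX
    obtain ⟨c₀, -, rfl⟩ := Finset.mem_image.1 hcY
    obtain ⟨d₀, -, rfl⟩ := Finset.mem_image.1 hdY
    have hab₀ : a₀ ≠ b₀ := fun h => hab (by rw [h])
    have hcd₀ : c₀ ≠ d₀ := fun h => hcd (by rw [h])
    have he1 : s(a₀, b₀) ∈ (SimpleGraph.completeGraph (Fin m)).edgeSet :=
      mem_completeGraph_edgeSet.2 (by rwa [Sym2.mk_isDiag_iff])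
    have he2 : s(c₀, d₀) ∈ (SimpleGraph.completeGraph (Fin m)).edgeSet :=
      mem_completeGraph_edgeSet.2 (by rwa [Sym2.mk_isDiag_iff])
    obtain ⟨k, hk, hku⟩ := hgc (s(a₀, b₀), s(c₀, d₀)) he1 he2
    have trans : ∀ k : Fin (gn m),
        ((s(a₀, b₀) ∈ bicliqueEdges (A₀ k) (B₀ k) ∧ s(c₀, d₀) ∈ bicliqueEdges (C₀ k) (D₀ k)) ↔
        (((φ a₀ ∈ A k ∧ φ b₀ ∈ B k) ∨ (φ b₀ ∈ A k ∧ φ a₀ ∈ B k)) ∧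
         ((ψ c₀ ∈ C k ∧ ψ d₀ ∈ D k) ∨ (ψ d₀ ∈ C k ∧ ψ c₀ ∈ D k)))) := by
      intro k
      rw [biclique_iff, biclique_iff, hA, hB, hC, hD]
      simp only [hφinj.mem_finset_image, hψinj.mem_finset_image]
    exact ⟨k, (trans k).1 hk, fun k' hk' => hku k' ((trans k').2 hk')⟩
  have hAX : ∀ k, A k ⊆ X := fun k => Finset.image_subset_image (Finset.subset_univ _)
  have hBX : ∀ k, B k ⊆ X := fun k => Finset.image_subset_image (Finset.subset_univ _)
  have hCY : ∀ k, C k ⊆ Y := fun k => Finset.image_subset_image (Finset.subset_univ _)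
  have hDY : ∀ k, D k ⊆ Y := fun k => Finset.image_subset_image (Finset.subset_univ _)
  have hABd : ∀ k, Disjoint (A k) (B k) :=
    fun k => (Finset.disjoint_image hφinj).2 (hAB₀ k)
  have hCDd : ∀ k, Disjoint (C k) (D k) :=
    fun k => (Finset.disjoint_image hψinj).2 (hCD₀ k)
  obtain ⟨hdall, hcov⟩ := combine hXY hU h1 h2 h3 h4 hAX hBX hCY hDY hABd hCDd hgcov
  have := fr_le_card _ hdall hcov
  simp only [Fintype.card_sum, Fintype.card_fin] at this
  omega

theorem bound (α : ℝ) (hα : 0 < α) (hg : ∀ n : ℕ, (gn n : ℝ) ≤ α * n ^ 2) :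
    ∀ n : ℕ, (fr 4 n : ℝ) ≤ α * n ^ 2 / 2 +
      (2 * α + 3) * (2 : ℝ) ^ (Nat.clog 2 n) * (Nat.clog 2 n) := by
  intro n
  induction n using Nat.strong_induction_on with
  | _ n ih =>
    by_cases hn : n ≤ 3
    · rw [fr_four_eq_zero hn]
      push_cast
      positivity
    · push_neg at hn
      set m' := (n + 1) / 2 with hm'
      have h2m : 2 ≤ m' := by omega
      have hm'n : m' < n := by omega
      have hn2m : n ≤ 2 * m' := by omega
      have h2mn : 2 * m' ≤ n + 1 := by omega
      have hmono : fr 4 n ≤ fr 4 (2 * m') := fr_mono (by norm_num) hn2m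
      have hstep := step m'
      have hIH := ih m' hm'n
      have hgm := hg m'
      have hclog : Nat.clog 2 n = Nat.clog 2 m' + 1 := by
        rw [Nat.clog_of_two_le (by norm_num) (by omega)]
        congr 2
      set L := Nat.clog 2 m' with hL
      have hpow : (m' : ℝ) ≤ (2 : ℝ) ^ L := by
        exact_mod_cast Nat.le_pow_clog (by norm_num) m'
      have hLnn : (0 : ℝ) ≤ (L : ℝ) := Nat.cast_nonneg L
      have hchain : (fr 4 n : ℝ) ≤ 2 * (fr 4 m' : ℝ) + (gn m' : ℝ) + 4 * m' := by
        have : (fr 4 n : ℝ) ≤ (fr 4 (2 * m') : ℝ) := Nat.cast_le.2 hmono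
        refine this.trans ?_
        exact_mod_cast Nat.cast_le.2 hstep
      rw [hclog]
      have hc1 : (2 : ℝ) * m' ≤ (n : ℝ) + 1 := by exact_mod_cast h2mn
      have hc2 : (n : ℝ) ≤ 2 * m' := by exact_mod_cast hn2m
      have hc4 : (4 : ℝ) ≤ (n : ℝ) := by exact_mod_cast hn
      have hsq : 4 * (m' : ℝ) ^ 2 ≤ ((n : ℝ) + 1) ^ 2 := by nlinarith [hc1, hc4]
      have hpowsucc : (2 : ℝ) ^ (L + 1) = 2 * (2 : ℝ) ^ L := by ring
      rw [hpowsucc]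
      push_cast
      nlinarith [hIH, hgm, hchain, hsq, hα.le, hpow, hLnn, hc2, hc4,
        mul_nonneg hα.le (sq_nonneg ((m' : ℝ))), mul_le_mul_of_nonneg_left hpow hLnn]

theorem stmt3 (α : ℝ) (hα : 0 < α) (hg : ∀ n : ℕ, (gn n : ℝ) ≤ α * n ^ 2) :
    ∃ C : ℝ, ∀ n : ℕ, (fr 4 n : ℝ) ≤ α * n ^ 2 / 2 + C * n * Real.log n := by
  have hlog2 : 0 < Real.log 2 := Real.log_pos (by norm_num)
  refine ⟨4 * (2 * α + 3) / Real.log 2, ?_⟩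
  intro n
  rcases le_or_gt n 1 with hn | hn
  · interval_cases n
    · rw [fr_four_eq_zero (by norm_num)]
      norm_num
    · rw [fr_four_eq_zero (by norm_num)]
      norm_num [Real.log_one]
      positivity
  · have h1n : 1 < n := hn
    have hmain := bound α hα hg n
    set L := Nat.clog 2 n with hLdef
    have hL1 : 1 ≤ L := Nat.clog_pos (by norm_num) (by omega)
    have hppred : (2 : ℕ) ^ (L - 1) < n := Nat.pow_pred_clog_lt_self (by norm_num) h1n
    have hpowR : (2 : ℝ) ^ (L - 1) < (n : ℝ) := by exact_mod_cast hppred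
    have hlogle : ((L : ℝ) - 1) * Real.log 2 ≤ Real.log n := by
      have h0 : (0 : ℝ) < (2 : ℝ) ^ (L - 1) := by positivity
      have hlog := Real.log_le_log h0 hpowR.le
      rw [Real.log_pow] at hlog
      have hcast : ((L - 1 : ℕ) : ℝ) = (L : ℝ) - 1 := by
        push_cast [Nat.cast_sub hL1]
        ring
      rw [hcast] at hlog
      exact hlog
    have hlogn2 : Real.log 2 ≤ Real.log n :=
      Real.log_le_log (by norm_num) (by exact_mod_cast hn)
    have hLle : (L : ℝ) * Real.log 2 ≤ 2 * Real.log n := by nlinarith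
    have h2Lnat : (2 : ℕ) ^ L ≤ 2 * n := by
      have heq : (2 : ℕ) ^ L = 2 ^ (L - 1) * 2 := by
        rw [← pow_succ]
        congr 1
        omega
      omega
    have h2L : ((2 : ℝ) ^ L) ≤ 2 * n := by exact_mod_cast h2Lnat
    have hlogn0 : 0 ≤ Real.log n := Real.log_nonneg (by exact_mod_cast h1n.le)
    have ht : (0 : ℝ) < 2 * α + 3 := by linarith
    have key : (2 : ℝ) ^ L * L ≤ (2 * n) * (2 * Real.log n / Real.log 2) := by
      apply mul_le_mul h2L ?_ (Nat.cast_nonneg L) (by positivity)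
      rw [le_div_iff₀ hlog2]
      linarith
    have key2 : (2 * α + 3) * ((2 : ℝ) ^ L * L) ≤
        (2 * α + 3) * ((2 * n) * (2 * Real.log n / Real.log 2)) :=
      mul_le_mul_of_nonneg_left key ht.le
    have heq : (2 * α + 3) * ((2 * (n : ℝ)) * (2 * Real.log n / Real.log 2)) =
        4 * (2 * α + 3) / Real.log 2 * n * Real.log n := by
      field_simp
      ring
    refine hmain.trans ?_
    nlinarith [key2, heq]
end

section
/- For any even n ≥ 4, f_4(n) ≤ 2 f_4(n/2) + g(n/2) + 2 f_3(n/2), where the right-hand side arises by splitting the vertex set into two equal halves. -/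
open Finset

lemma univ4 : (univ : Finset (Fin 4)) = {0,1,2,3} := by decide
lemma univ3 : (univ : Finset (Fin 3)) = {0,1,2} := by decide

lemma crossEdges4_iff {V : Type*} [DecidableEq V] (P : Fin 4 → Finset V) (e : Finset V) :
    e ∈ crossEdges P ↔ ∃ a ∈ P 0, ∃ b ∈ P 1, ∃ c ∈ P 2, ∃ d ∈ P 3,
      e = {a, b, c, d} := by
  constructor
  · rintro ⟨f, hf, rfl⟩
    exact ⟨f 0, hf 0, f 1, hf 1, f 2, hf 2, f 3, hf 3, by
      rw [univ4]; simp [Finset.image_insert]⟩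
  · rintro ⟨a, ha, b, hb, c, hc, d, hd, rfl⟩
    refine ⟨![a,b,c,d], ?_, ?_⟩
    · intro i; fin_cases i <;> simpa
    · rw [univ4]; simp [Finset.image_insert]

lemma crossEdges3_iff {V : Type*} [DecidableEq V] (P : Fin 3 → Finset V) (e : Finset V) :
    e ∈ crossEdges P ↔ ∃ a ∈ P 0, ∃ b ∈ P 1, ∃ c ∈ P 2, e = {a, b, c} := by
  constructor
  · rintro ⟨f, hf, rfl⟩
    exact ⟨f 0, hf 0, f 1, hf 1, f 2, hf 2, by rw [univ3]; simp [Finset.image_insert]⟩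
  · rintro ⟨a, ha, b, hb, c, hc, rfl⟩
    refine ⟨![a,b,c], ?_, ?_⟩
    · intro i; fin_cases i <;> simpa
    · rw [univ3]; simp [Finset.image_insert]

lemma quad_distinct {V : Type*} [DecidableEq V] {a b c d : V}
    (h : ({a, b, c, d} : Finset V).card = 4) :
    a ≠ b ∧ a ≠ c ∧ a ≠ d ∧ b ≠ c ∧ b ≠ d ∧ c ≠ d := by
  have h3 : ∀ x y z : V, ({x, y, z} : Finset V).card ≤ 3 := by
    intro x y z
    refine le_trans (Finset.card_insert_le _ _) ?_
    have := Finset.card_insert_le y ({z} : Finset V)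
    simp at this ⊢; omega
  refine ⟨?_, ?_, ?_, ?_, ?_, ?_⟩ <;> rintro rfl
  · have h4 := Finset.card_le_card (show ({a,a,c,d} : Finset V) ⊆ {a,c,d} by intro x hx; simp at hx ⊢; tauto)
    have := h3 a c d; omega
  · have h4 := Finset.card_le_card (show ({a,b,a,d} : Finset V) ⊆ {a,b,d} by intro x hx; simp at hx ⊢; tauto)
    have := h3 a b d; omega
  · have h4 := Finset.card_le_card (show ({a,b,c,a} : Finset V) ⊆ {a,b,c} by intro x hx; simp at hx ⊢; tauto)
    have := h3 a b c; omega
  · have h4 := Finset.card_le_card (show ({a,b,b,d} : Finset V) ⊆ {a,b,d} by intro x hx; simp at hx ⊢; tauto)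
    have := h3 a b d; omega
  · have h4 := Finset.card_le_card (show ({a,b,c,b} : Finset V) ⊆ {a,b,c} by intro x hx; simp at hx ⊢; tauto)
    have := h3 a b c; omega
  · have h4 := Finset.card_le_card (show ({a,b,c,c} : Finset V) ⊆ {a,b,c} by intro x hx; simp at hx ⊢; tauto)
    have := h3 a b c; omega

lemma pair_eq {V : Type*} [DecidableEq V] {a b c d : V} (hab : a ≠ b)
    (h : ({a, b} : Finset V) = {c, d}) : (a = c ∧ b = d) ∨ (a = d ∧ b = c) := by
  have ha : a ∈ ({c, d} : Finset V) := h ▸ (by simp)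
  have hb : b ∈ ({c, d} : Finset V) := h ▸ (by simp)
  have hc : c ∈ ({a, b} : Finset V) := h ▸ (by simp)
  have hd : d ∈ ({a, b} : Finset V) := h ▸ (by simp)
  simp at ha hb hc hd
  rcases ha with rfl | rfl
  · rcases hb with rfl | rfl
    · rcases hd with rfl | rfl
      · exact absurd rfl hab
      · exact Or.inl ⟨rfl, rfl⟩
    · exact Or.inl ⟨rfl, rfl⟩
  · rcases hb with rfl | rfl
    · exact Or.inr ⟨rfl, rfl⟩
    · rcases hc with rfl | rfl
      · exact Or.inr ⟨rfl, rfl⟩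
      · exact absurd rfl hab

lemma pair_sym2 {V : Type*} [DecidableEq V] {a b c d : V} (hab : a ≠ b)
    (h : ({a, b} : Finset V) = {c, d}) : s(a, b) = s(c, d) := by
  rcases pair_eq hab h with ⟨rfl, rfl⟩ | ⟨rfl, rfl⟩
  · rfl
  · exact Sym2.eq_swap

lemma image_orderIsoOfFin {N r : ℕ} {s : Finset (Fin N)} (h : s.card = r) :
    Finset.image (fun i => ((s.orderIsoOfFin h) i : Fin N)) univ = s := by
  ext x
  simp only [Finset.mem_image, Finset.mem_univ, true_and]
  constructor
  · rintro ⟨i, rfl⟩; exact (s.orderIsoOfFin h i).2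
  · intro hx; exact ⟨(s.orderIsoOfFin h).symm ⟨x, hx⟩, by simp⟩

lemma frSet_nonempty_s4 (r N : ℕ) : Set.Nonempty {m | ∃ P : Fin m → Fin r → Finset (Fin N),
    (∀ k, Pairwise (Function.onFun Disjoint (P k))) ∧
    ∀ e : Finset (Fin N), e.card = r → ∃! k, e ∈ crossEdges (P k)} := by
  obtain ⟨M, ⟨τ⟩⟩ := Finite.exists_equiv_fin {e : Finset (Fin N) // e.card = r}
  refine ⟨M, fun k i => {((τ.symm k).1.orderIsoOfFin (τ.symm k).2 i : Fin N)}, ?_, ?_⟩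
  · intro k i j hij
    simp only [Function.onFun, Finset.disjoint_singleton]
    intro hc
    exact hij (((τ.symm k).1.orderIsoOfFin (τ.symm k).2).injective (Subtype.ext hc))
  · intro e he
    have key : ∀ k, e ∈ crossEdges (fun i =>
        ({((τ.symm k).1.orderIsoOfFin (τ.symm k).2 i : Fin N)} : Finset (Fin N)))
        ↔ e = (τ.symm k).1 := by
      intro k
      constructor
      · rintro ⟨f, hf, rfl⟩
        have : ∀ i, f i = ((τ.symm k).1.orderIsoOfFin (τ.symm k).2 i : Fin N) := by
          intro i; simpa using hf i
        rw [Finset.image_congr (fun x _ => this x)]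
        exact image_orderIsoOfFin _
      · rintro rfl
        exact ⟨fun i => ((τ.symm k).1.orderIsoOfFin (τ.symm k).2 i : Fin N),
          fun i => by simp, (image_orderIsoOfFin _).symm⟩
    refine ⟨τ ⟨e, he⟩, (key _).mpr (by simp), ?_⟩
    · intro k' hk'
      replace hk' := (key _).mp hk'
      have : τ.symm k' = ⟨e, he⟩ := Subtype.ext hk'.symm
      rw [← this]; simp

lemma gSet_nonempty (N : ℕ) :
    Set.Nonempty {m | ∃ A B : Fin m → Finset (Fin N), ∃ C D : Fin m → Finset (Fin N),
    (∀ k, Disjoint (A k) (B k)) ∧ (∀ k, Disjoint (C k) (D k)) ∧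
    (∀ k, bicliqueEdges (A k) (B k) ⊆ (SimpleGraph.completeGraph (Fin N)).edgeSet) ∧
    (∀ k, bicliqueEdges (C k) (D k) ⊆ (SimpleGraph.completeGraph (Fin N)).edgeSet) ∧
    ∀ p : Sym2 (Fin N) × Sym2 (Fin N),
      p.1 ∈ (SimpleGraph.completeGraph (Fin N)).edgeSet → p.2 ∈ (SimpleGraph.completeGraph (Fin N)).edgeSet →
      ∃! k, p.1 ∈ bicliqueEdges (A k) (B k) ∧ p.2 ∈ bicliqueEdges (C k) (D k)} := by
  set G := SimpleGraph.completeGraph (Fin N)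
  obtain ⟨M, ⟨τ⟩⟩ := Finite.exists_equiv_fin
    {p : Sym2 (Fin N) × Sym2 (Fin N) // p.1 ∈ G.edgeSet ∧ p.2 ∈ G.edgeSet}
  have hout : ∀ e : Sym2 (Fin N), s(e.out.1, e.out.2) = e := by
    intro e
    show Quot.mk _ (e.out.1, e.out.2) = e
    rw [Prod.mk.eta]
    exact Quot.out_eq e
  have hne : ∀ e : Sym2 (Fin N), e ∈ G.edgeSet → e.out.1 ≠ e.out.2 := by
    intro e he hc
    apply G.not_isDiag_of_mem_edgeSet he
    rw [← hout e, hc]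
    exact Sym2.mk_isDiag_iff.mpr rfl
  have hbic : ∀ (x y : Fin N) (e : Sym2 (Fin N)),
      e ∈ bicliqueEdges {x} {y} ↔ e = s(x, y) := by
    intro x y e
    constructor
    · rintro ⟨a, ha, b, hb, rfl⟩
      simp only [Finset.mem_singleton] at ha hb
      rw [ha, hb]
    · rintro rfl; exact ⟨x, by simp, y, by simp, rfl⟩
  refine ⟨M, fun k => {(τ.symm k).1.1.out.1}, fun k => {(τ.symm k).1.1.out.2},
    fun k => {(τ.symm k).1.2.out.1}, fun k => {(τ.symm k).1.2.out.2}, ?_, ?_, ?_, ?_, ?_⟩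
  · intro k
    simp only [Finset.disjoint_singleton]
    exact hne _ (τ.symm k).2.1
  · intro k
    simp only [Finset.disjoint_singleton]
    exact hne _ (τ.symm k).2.2
  · intro k e he
    rw [hbic] at he
    subst he
    exact (SimpleGraph.mem_edgeSet G).mpr (hne _ (τ.symm k).2.1)
  · intro k e he
    rw [hbic] at he
    subst he
    exact (SimpleGraph.mem_edgeSet G).mpr (hne _ (τ.symm k).2.2)
  · rintro ⟨e1, e2⟩ he1 he2
    refine ⟨τ ⟨(e1, e2), he1, he2⟩, ?_, ?_⟩
    · simp [hbic, hout]
    · intro k' hk'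
      simp only [hbic, hout] at hk'
      have : τ.symm k' = ⟨(e1, e2), he1, he2⟩ := by
        apply Subtype.ext
        exact Prod.ext hk'.1.symm hk'.2.symm
      rw [← this]; simp


def Lf (m : ℕ) (a : Fin m) : Fin (m + m) := ⟨a.1, by omega⟩
def Rf (m : ℕ) (a : Fin m) : Fin (m + m) := ⟨m + a.1, by omega⟩
def dn (m : ℕ) (x : Fin (m + m)) : Fin m :=
  ⟨x.1 % m, Nat.mod_lt _ (by have := x.2; omega)⟩

lemma Lf_inj {m : ℕ} : Function.Injective (Lf m) := by
  intro a b h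
  have := congrArg Fin.val h
  simpa [Lf, Fin.ext_iff] using this

lemma Rf_inj {m : ℕ} : Function.Injective (Rf m) := by
  intro a b h
  have := congrArg Fin.val h
  simp only [Rf] at this
  exact Fin.ext (by omega)

lemma Lf_lt {m : ℕ} (a : Fin m) : (Lf m a).1 < m := a.2

lemma Rf_not_lt {m : ℕ} (a : Fin m) : ¬ (Rf m a).1 < m := by simp [Rf]

lemma dn_Lf {m : ℕ} (a : Fin m) : dn m (Lf m a) = a :=
  Fin.ext (by simp [dn, Lf, Nat.mod_eq_of_lt a.2])

lemma dn_Rf {m : ℕ} (a : Fin m) : dn m (Rf m a) = a :=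
  Fin.ext (by simp [dn, Rf, Nat.add_mod_left, Nat.mod_eq_of_lt a.2])

lemma Lf_dn {m : ℕ} {x : Fin (m + m)} (h : x.1 < m) : Lf m (dn m x) = x :=
  Fin.ext (by simp [dn, Lf, Nat.mod_eq_of_lt h])

lemma Rf_dn {m : ℕ} {x : Fin (m + m)} (h : ¬ x.1 < m) : Rf m (dn m x) = x := by
  have h2 := x.2
  have hm : m ≤ x.1 := by omega
  apply Fin.ext
  simp only [Rf, dn]
  rw [Nat.mod_eq_sub_mod hm, Nat.mod_eq_of_lt (by omega)]
  omega

lemma disj_LR {m : ℕ} (S T : Finset (Fin m)) :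
    Disjoint (S.image (Lf m)) (T.image (Rf m)) := by
  rw [Finset.disjoint_left]
  rintro x hx hx'
  obtain ⟨a, -, rfl⟩ := Finset.mem_image.mp hx
  obtain ⟨b, -, hb⟩ := Finset.mem_image.mp hx'
  have := congrArg Fin.val hb
  have ha2 := a.2
  simp only [Lf, Rf] at this
  omega

lemma image_Lf_dn {m : ℕ} {e : Finset (Fin (m + m))} (h : ∀ x ∈ e, x.1 < m) :
    (e.image (dn m)).image (Lf m) = e := by
  rw [Finset.image_image]
  ext y
  simp only [Finset.mem_image, Function.comp]
  constructor
  · rintro ⟨x, hx, rfl⟩; rwa [Lf_dn (h x hx)]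
  · intro hy; exact ⟨y, hy, Lf_dn (h y hy)⟩

lemma image_Rf_dn {m : ℕ} {e : Finset (Fin (m + m))} (h : ∀ x ∈ e, ¬ x.1 < m) :
    (e.image (dn m)).image (Rf m) = e := by
  rw [Finset.image_image]
  ext y
  simp only [Finset.mem_image, Function.comp]
  constructor
  · rintro ⟨x, hx, rfl⟩; rwa [Rf_dn (h x hx)]
  · intro hy; exact ⟨y, hy, Rf_dn (h y hy)⟩

lemma card_image_dn_L {m : ℕ} {e : Finset (Fin (m + m))} (h : ∀ x ∈ e, x.1 < m) :
    (e.image (dn m)).card = e.card := by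
  apply Finset.card_image_of_injOn
  intro x hx y hy hxy
  rw [← Lf_dn (h x hx), ← Lf_dn (h y hy), hxy]

lemma card_image_dn_R {m : ℕ} {e : Finset (Fin (m + m))} (h : ∀ x ∈ e, ¬ x.1 < m) :
    (e.image (dn m)).card = e.card := by
  apply Finset.card_image_of_injOn
  intro x hx y hy hxy
  rw [← Rf_dn (h x hx), ← Rf_dn (h y hy), hxy]

-- filter helpers
section filt
variable {α : Type*} [DecidableEq α] {p : α → Prop} [DecidablePred p] {a b c d : α}

lemma filtTTFF (pa : p a) (pb : p b) (pc : ¬ p c) (pd : ¬ p d) :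
    ({a, b, c, d} : Finset α).filter p = {a, b} := by
  rw [Finset.filter_insert, if_pos pa, Finset.filter_insert, if_pos pb,
    Finset.filter_insert, if_neg pc, Finset.filter_singleton, if_neg pd]
  simp

lemma filtFFTT (pa : ¬ p a) (pb : ¬ p b) (pc : p c) (pd : p d) :
    ({a, b, c, d} : Finset α).filter p = {c, d} := by
  rw [Finset.filter_insert, if_neg pa, Finset.filter_insert, if_neg pb,
    Finset.filter_insert, if_pos pc, Finset.filter_singleton, if_pos pd]

lemma filtTTTF (pa : p a) (pb : p b) (pc : p c) (pd : ¬ p d) :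
    ({a, b, c, d} : Finset α).filter p = {a, b, c} := by
  rw [Finset.filter_insert, if_pos pa, Finset.filter_insert, if_pos pb,
    Finset.filter_insert, if_pos pc, Finset.filter_singleton, if_neg pd]
  simp

lemma filtFFFT (pa : ¬ p a) (pb : ¬ p b) (pc : ¬ p c) (pd : p d) :
    ({a, b, c, d} : Finset α).filter p = {d} := by
  rw [Finset.filter_insert, if_neg pa, Finset.filter_insert, if_neg pb,
    Finset.filter_insert, if_neg pc, Finset.filter_singleton, if_pos pd]

lemma filtTTTT (pa : p a) (pb : p b) (pc : p c) (pd : p d) :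
    ({a, b, c, d} : Finset α).filter p = {a, b, c, d} := by
  apply Finset.filter_true_of_mem
  intro x hx
  simp only [Finset.mem_insert, Finset.mem_singleton] at hx
  rcases hx with rfl | rfl | rfl | rfl <;> assumption

lemma filtFFFF (pa : ¬ p a) (pb : ¬ p b) (pc : ¬ p c) (pd : ¬ p d) :
    ({a, b, c, d} : Finset α).filter p = ∅ := by
  apply Finset.filter_false_of_mem
  intro x hx
  simp only [Finset.mem_insert, Finset.mem_singleton] at hx
  rcases hx with rfl | rfl | rfl | rfl <;> assumption
end filt

section core
variable {m F4 F3 GN : ℕ}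
variable (P4 : Fin F4 → Fin 4 → Finset (Fin m)) (P3 : Fin F3 → Fin 3 → Finset (Fin m))
variable (A B C D : Fin GN → Finset (Fin m))

def QQ : (Fin F4 ⊕ Fin F4 ⊕ Fin GN ⊕ Fin F3 ⊕ Fin F3) → Fin 4 → Finset (Fin (m + m)) :=
  Sum.elim (fun k i => (P4 k i).image (Lf m))
    (Sum.elim (fun k i => (P4 k i).image (Rf m))
      (Sum.elim (fun k => ![(A k).image (Lf m), (B k).image (Lf m),
          (C k).image (Rf m), (D k).image (Rf m)])
        (Sum.elim (fun k => ![(P3 k 0).image (Lf m), (P3 k 1).image (Lf m),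
            (P3 k 2).image (Lf m), Finset.univ.image (Rf m)])
          (fun k => ![(P3 k 0).image (Rf m), (P3 k 1).image (Rf m),
            (P3 k 2).image (Rf m), Finset.univ.image (Lf m)]))))

def pat {F4 F3 GN : ℕ} : (Fin F4 ⊕ Fin F4 ⊕ Fin GN ⊕ Fin F3 ⊕ Fin F3) → ℕ :=
  Sum.elim (fun _ => 4) (Sum.elim (fun _ => 0)
    (Sum.elim (fun _ => 2) (Sum.elim (fun _ => 3) (fun _ => 1))))

lemma sideL (k) (e : Finset (Fin (m + m))) (he : e.card = 4)
    (hk : e ∈ crossEdges (QQ P4 P3 A B C D k)) :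
    (e.filter (fun x => x.1 < m)).card = pat k := by
  obtain (k | k | k | k | k) := k <;>
    obtain ⟨a, ha, b, hb, c, hc, d, hd, rfl⟩ := (crossEdges4_iff _ _).mp hk <;>
    simp only [pat, Sum.elim_inl, Sum.elim_inr]
  · replace ha : a ∈ (P4 k 0).image (Lf m) := ha
    replace hb : b ∈ (P4 k 1).image (Lf m) := hb
    replace hc : c ∈ (P4 k 2).image (Lf m) := hc
    replace hd : d ∈ (P4 k 3).image (Lf m) := hd
    obtain ⟨a₀, -, rfl⟩ := Finset.mem_image.mp ha
    obtain ⟨b₀, -, rfl⟩ := Finset.mem_image.mp hb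
    obtain ⟨c₀, -, rfl⟩ := Finset.mem_image.mp hc
    obtain ⟨d₀, -, rfl⟩ := Finset.mem_image.mp hd
    rw [filtTTTT (p := fun x : Fin (m+m) => x.1 < m) (Lf_lt a₀) (Lf_lt b₀) (Lf_lt c₀) (Lf_lt d₀)]
    exact he
  · replace ha : a ∈ (P4 k 0).image (Rf m) := ha
    replace hb : b ∈ (P4 k 1).image (Rf m) := hb
    replace hc : c ∈ (P4 k 2).image (Rf m) := hc
    replace hd : d ∈ (P4 k 3).image (Rf m) := hd
    obtain ⟨a₀, -, rfl⟩ := Finset.mem_image.mp ha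
    obtain ⟨b₀, -, rfl⟩ := Finset.mem_image.mp hb
    obtain ⟨c₀, -, rfl⟩ := Finset.mem_image.mp hc
    obtain ⟨d₀, -, rfl⟩ := Finset.mem_image.mp hd
    rw [filtFFFF (p := fun x : Fin (m+m) => x.1 < m) (Rf_not_lt a₀) (Rf_not_lt b₀) (Rf_not_lt c₀) (Rf_not_lt d₀)]
    simp
  · replace ha : a ∈ (A k).image (Lf m) := ha
    replace hb : b ∈ (B k).image (Lf m) := hb
    replace hc : c ∈ (C k).image (Rf m) := hc
    replace hd : d ∈ (D k).image (Rf m) := hd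
    obtain ⟨a₀, -, rfl⟩ := Finset.mem_image.mp ha
    obtain ⟨b₀, -, rfl⟩ := Finset.mem_image.mp hb
    obtain ⟨c₀, -, rfl⟩ := Finset.mem_image.mp hc
    obtain ⟨d₀, -, rfl⟩ := Finset.mem_image.mp hd
    rw [filtTTFF (p := fun x : Fin (m+m) => x.1 < m) (Lf_lt a₀) (Lf_lt b₀) (Rf_not_lt c₀) (Rf_not_lt d₀)]
    obtain ⟨hab, -, -, -, -, -⟩ := quad_distinct he
    exact Finset.card_pair hab
  · replace ha : a ∈ (P3 k 0).image (Lf m) := ha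
    replace hb : b ∈ (P3 k 1).image (Lf m) := hb
    replace hc : c ∈ (P3 k 2).image (Lf m) := hc
    replace hd : d ∈ (Finset.univ : Finset (Fin m)).image (Rf m) := hd
    obtain ⟨a₀, -, rfl⟩ := Finset.mem_image.mp ha
    obtain ⟨b₀, -, rfl⟩ := Finset.mem_image.mp hb
    obtain ⟨c₀, -, rfl⟩ := Finset.mem_image.mp hc
    obtain ⟨d₀, -, rfl⟩ := Finset.mem_image.mp hd
    rw [filtTTTF (p := fun x : Fin (m+m) => x.1 < m) (Lf_lt a₀) (Lf_lt b₀) (Lf_lt c₀) (Rf_not_lt d₀)]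
    obtain ⟨hab, hac, -, hbc, -, -⟩ := quad_distinct he
    rw [Finset.card_insert_of_notMem (by simp [hab, hac]),
      Finset.card_insert_of_notMem (by simp [hbc]), Finset.card_singleton]
  · replace ha : a ∈ (P3 k 0).image (Rf m) := ha
    replace hb : b ∈ (P3 k 1).image (Rf m) := hb
    replace hc : c ∈ (P3 k 2).image (Rf m) := hc
    replace hd : d ∈ (Finset.univ : Finset (Fin m)).image (Lf m) := hd
    obtain ⟨a₀, -, rfl⟩ := Finset.mem_image.mp ha
    obtain ⟨b₀, -, rfl⟩ := Finset.mem_image.mp hb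
    obtain ⟨c₀, -, rfl⟩ := Finset.mem_image.mp hc
    obtain ⟨d₀, -, rfl⟩ := Finset.mem_image.mp hd
    rw [filtFFFT (p := fun x : Fin (m+m) => x.1 < m) (Rf_not_lt a₀) (Rf_not_lt b₀) (Rf_not_lt c₀) (Lf_lt d₀)]
    exact Finset.card_singleton _

lemma filter_split {α : Type*} [DecidableEq α] {p : α → Prop} [DecidablePred p]
    {e s t : Finset α} (hL : e.filter p = s) (hR : e.filter (fun u => ¬ p u) = t) :
    e = s ∪ t := by
  subst hL; subst hR
  ext u
  simp only [Finset.mem_union, Finset.mem_filter]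
  by_cases hcase : p u <;> tauto

lemma QQdisj (h4 : ∀ k, Pairwise (Function.onFun Disjoint (P4 k)))
    (h3 : ∀ k, Pairwise (Function.onFun Disjoint (P3 k)))
    (hAB : ∀ k, Disjoint (A k) (B k)) (hCD : ∀ k, Disjoint (C k) (D k)) :
    ∀ k, Pairwise (Function.onFun Disjoint (QQ P4 P3 A B C D k)) := by
  rintro (k | k | k | k | k) i j hij
  · exact (Finset.disjoint_image Lf_inj).mpr (h4 k hij)
  · exact (Finset.disjoint_image Rf_inj).mpr (h4 k hij)
  · have dAB := (Finset.disjoint_image Lf_inj).mpr (hAB k)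
    have dCD := (Finset.disjoint_image Rf_inj).mpr (hCD k)
    fin_cases i <;> fin_cases j <;>
      first
        | exact absurd rfl hij
        | exact dAB | exact dAB.symm | exact dCD | exact dCD.symm
        | exact disj_LR _ _ | exact (disj_LR _ _).symm
  · have d01 := (Finset.disjoint_image Lf_inj).mpr (h3 k (show (0 : Fin 3) ≠ 1 by decide))
    have d02 := (Finset.disjoint_image Lf_inj).mpr (h3 k (show (0 : Fin 3) ≠ 2 by decide))
    have d12 := (Finset.disjoint_image Lf_inj).mpr (h3 k (show (1 : Fin 3) ≠ 2 by decide))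
    fin_cases i <;> fin_cases j <;>
      first
        | exact absurd rfl hij
        | exact d01 | exact d01.symm | exact d02 | exact d02.symm | exact d12 | exact d12.symm
        | exact disj_LR _ _ | exact (disj_LR _ _).symm
  · have d01 := (Finset.disjoint_image Rf_inj).mpr (h3 k (show (0 : Fin 3) ≠ 1 by decide))
    have d02 := (Finset.disjoint_image Rf_inj).mpr (h3 k (show (0 : Fin 3) ≠ 2 by decide))
    have d12 := (Finset.disjoint_image Rf_inj).mpr (h3 k (show (1 : Fin 3) ≠ 2 by decide))
    fin_cases i <;> fin_cases j <;>
      first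
        | exact absurd rfl hij
        | exact d01 | exact d01.symm | exact d02 | exact d02.symm | exact d12 | exact d12.symm
        | exact disj_LR _ _ | exact (disj_LR _ _).symm

lemma charA (e : Finset (Fin (m + m))) (hsub : ∀ x ∈ e, x.1 < m) (k : Fin F4) :
    e ∈ crossEdges (QQ P4 P3 A B C D (Sum.inl k)) ↔ e.image (dn m) ∈ crossEdges (P4 k) := by
  rw [crossEdges4_iff, crossEdges4_iff]
  constructor
  · rintro ⟨a, ha, b, hb, c, hc, d, hd, rfl⟩
    replace ha : a ∈ (P4 k 0).image (Lf m) := ha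
    replace hb : b ∈ (P4 k 1).image (Lf m) := hb
    replace hc : c ∈ (P4 k 2).image (Lf m) := hc
    replace hd : d ∈ (P4 k 3).image (Lf m) := hd
    obtain ⟨a₀, ha₀, rfl⟩ := Finset.mem_image.mp ha
    obtain ⟨b₀, hb₀, rfl⟩ := Finset.mem_image.mp hb
    obtain ⟨c₀, hc₀, rfl⟩ := Finset.mem_image.mp hc
    obtain ⟨d₀, hd₀, rfl⟩ := Finset.mem_image.mp hd
    exact ⟨a₀, ha₀, b₀, hb₀, c₀, hc₀, d₀, hd₀, by
      simp [Finset.image_insert, dn_Lf]⟩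
  · rintro ⟨a₀, ha₀, b₀, hb₀, c₀, hc₀, d₀, hd₀, h⟩
    refine ⟨Lf m a₀, Finset.mem_image_of_mem _ ha₀, Lf m b₀, Finset.mem_image_of_mem _ hb₀,
      Lf m c₀, Finset.mem_image_of_mem _ hc₀, Lf m d₀, Finset.mem_image_of_mem _ hd₀, ?_⟩
    rw [← image_Lf_dn hsub, h]
    simp [Finset.image_insert]

lemma charB (e : Finset (Fin (m + m))) (hsub : ∀ x ∈ e, ¬ x.1 < m) (k : Fin F4) :
    e ∈ crossEdges (QQ P4 P3 A B C D (Sum.inr (Sum.inl k))) ↔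
      e.image (dn m) ∈ crossEdges (P4 k) := by
  rw [crossEdges4_iff, crossEdges4_iff]
  constructor
  · rintro ⟨a, ha, b, hb, c, hc, d, hd, rfl⟩
    replace ha : a ∈ (P4 k 0).image (Rf m) := ha
    replace hb : b ∈ (P4 k 1).image (Rf m) := hb
    replace hc : c ∈ (P4 k 2).image (Rf m) := hc
    replace hd : d ∈ (P4 k 3).image (Rf m) := hd
    obtain ⟨a₀, ha₀, rfl⟩ := Finset.mem_image.mp ha
    obtain ⟨b₀, hb₀, rfl⟩ := Finset.mem_image.mp hb
    obtain ⟨c₀, hc₀, rfl⟩ := Finset.mem_image.mp hc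
    obtain ⟨d₀, hd₀, rfl⟩ := Finset.mem_image.mp hd
    exact ⟨a₀, ha₀, b₀, hb₀, c₀, hc₀, d₀, hd₀, by
      simp [Finset.image_insert, dn_Rf]⟩
  · rintro ⟨a₀, ha₀, b₀, hb₀, c₀, hc₀, d₀, hd₀, h⟩
    refine ⟨Rf m a₀, Finset.mem_image_of_mem _ ha₀, Rf m b₀, Finset.mem_image_of_mem _ hb₀,
      Rf m c₀, Finset.mem_image_of_mem _ hc₀, Rf m d₀, Finset.mem_image_of_mem _ hd₀, ?_⟩
    rw [← image_Rf_dn hsub, h]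
    simp [Finset.image_insert]

lemma charG (e : Finset (Fin (m + m))) {x y z w : Fin (m + m)}
    (hxy : x ≠ y) (hzw : z ≠ w)
    (hL : e.filter (fun u => u.1 < m) = {x, y})
    (hR : e.filter (fun u => ¬ u.1 < m) = {z, w}) (k : Fin GN) :
    e ∈ crossEdges (QQ P4 P3 A B C D (Sum.inr (Sum.inr (Sum.inl k)))) ↔
      (s(dn m x, dn m y) ∈ bicliqueEdges (A k) (B k) ∧
       s(dn m z, dn m w) ∈ bicliqueEdges (C k) (D k)) := by
  have hx : x ∈ e.filter (fun u => u.1 < m) := by rw [hL]; simp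
  have hy : y ∈ e.filter (fun u => u.1 < m) := by rw [hL]; simp
  have hz : z ∈ e.filter (fun u => ¬ u.1 < m) := by rw [hR]; simp
  have hw : w ∈ e.filter (fun u => ¬ u.1 < m) := by rw [hR]; simp
  have hpx := (Finset.mem_filter.mp hx).2
  have hpy := (Finset.mem_filter.mp hy).2
  have hpz := (Finset.mem_filter.mp hz).2
  have hpw := (Finset.mem_filter.mp hw).2
  have hnxy : dn m x ≠ dn m y := fun hc => hxy (by rw [← Lf_dn hpx, ← Lf_dn hpy, hc])
  have hnzw : dn m z ≠ dn m w := fun hc => hzw (by rw [← Rf_dn hpz, ← Rf_dn hpw, hc])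
  constructor
  · intro hk
    obtain ⟨a, ha, b, hb, c, hc, d, hd, rfl⟩ := (crossEdges4_iff _ _).mp hk
    replace ha : a ∈ (A k).image (Lf m) := ha
    replace hb : b ∈ (B k).image (Lf m) := hb
    replace hc : c ∈ (C k).image (Rf m) := hc
    replace hd : d ∈ (D k).image (Rf m) := hd
    obtain ⟨a₀, ha₀, rfl⟩ := Finset.mem_image.mp ha
    obtain ⟨b₀, hb₀, rfl⟩ := Finset.mem_image.mp hb
    obtain ⟨c₀, hc₀, rfl⟩ := Finset.mem_image.mp hc
    obtain ⟨d₀, hd₀, rfl⟩ := Finset.mem_image.mp hd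
    have hfL := filtTTFF (p := fun x : Fin (m+m) => x.1 < m)
      (Lf_lt a₀) (Lf_lt b₀) (Rf_not_lt c₀) (Rf_not_lt d₀)
    have hfR := filtFFTT (p := fun x : Fin (m+m) => ¬ x.1 < m)
      (not_not_intro (Lf_lt a₀)) (not_not_intro (Lf_lt b₀)) (Rf_not_lt c₀) (Rf_not_lt d₀)
    have h1 : ({x, y} : Finset _) = {Lf m a₀, Lf m b₀} := hL.symm.trans hfL
    have h2 : ({z, w} : Finset _) = {Rf m c₀, Rf m d₀} := hR.symm.trans hfR
    have hdx : ({dn m x, dn m y} : Finset (Fin m)) = {a₀, b₀} := by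
      have := congrArg (Finset.image (dn m)) h1
      simpa [Finset.image_insert, dn_Lf] using this
    have hdz : ({dn m z, dn m w} : Finset (Fin m)) = {c₀, d₀} := by
      have := congrArg (Finset.image (dn m)) h2
      simpa [Finset.image_insert, dn_Rf] using this
    exact ⟨⟨a₀, ha₀, b₀, hb₀, pair_sym2 hnxy hdx⟩, ⟨c₀, hc₀, d₀, hd₀, pair_sym2 hnzw hdz⟩⟩
  · rintro ⟨⟨a₀, ha₀, b₀, hb₀, hs1⟩, ⟨c₀, hc₀, d₀, hd₀, hs2⟩⟩
    have h1 : ({x, y} : Finset _) = {Lf m a₀, Lf m b₀} := by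
      rcases Sym2.eq_iff.mp hs1 with ⟨ha, hb⟩ | ⟨ha, hb⟩
      · rw [← Lf_dn hpx, ← Lf_dn hpy, ha, hb]
      · rw [← Lf_dn hpx, ← Lf_dn hpy, ha, hb]; exact Finset.pair_comm _ _
    have h2 : ({z, w} : Finset _) = {Rf m c₀, Rf m d₀} := by
      rcases Sym2.eq_iff.mp hs2 with ⟨hc, hd⟩ | ⟨hc, hd⟩
      · rw [← Rf_dn hpz, ← Rf_dn hpw, hc, hd]
      · rw [← Rf_dn hpz, ← Rf_dn hpw, hc, hd]; exact Finset.pair_comm _ _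
    have he2 := filter_split hL hR
    apply (crossEdges4_iff _ _).mpr
    refine ⟨Lf m a₀, Finset.mem_image_of_mem _ ha₀, Lf m b₀, Finset.mem_image_of_mem _ hb₀,
      Rf m c₀, Finset.mem_image_of_mem _ hc₀, Rf m d₀, Finset.mem_image_of_mem _ hd₀, ?_⟩
    rw [he2, h1, h2]
    ext u; simp; try tauto

lemma charCL (e : Finset (Fin (m + m))) {x y z w : Fin (m + m)}
    (hL : e.filter (fun u => u.1 < m) = {x, y, z})
    (hR : e.filter (fun u => ¬ u.1 < m) = {w}) (k : Fin F3) :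
    e ∈ crossEdges (QQ P4 P3 A B C D (Sum.inr (Sum.inr (Sum.inr (Sum.inl k))))) ↔
      ({dn m x, dn m y, dn m z} : Finset (Fin m)) ∈ crossEdges (P3 k) := by
  have hx : x ∈ e.filter (fun u => u.1 < m) := by rw [hL]; simp
  have hy : y ∈ e.filter (fun u => u.1 < m) := by rw [hL]; simp
  have hz : z ∈ e.filter (fun u => u.1 < m) := by rw [hL]; simp
  have hw : w ∈ e.filter (fun u => ¬ u.1 < m) := by rw [hR]; simp
  have hpx := (Finset.mem_filter.mp hx).2
  have hpy := (Finset.mem_filter.mp hy).2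
  have hpz := (Finset.mem_filter.mp hz).2
  have hpw := (Finset.mem_filter.mp hw).2
  constructor
  · intro hk
    obtain ⟨a, ha, b, hb, c, hc, d, hd, rfl⟩ := (crossEdges4_iff _ _).mp hk
    replace ha : a ∈ (P3 k 0).image (Lf m) := ha
    replace hb : b ∈ (P3 k 1).image (Lf m) := hb
    replace hc : c ∈ (P3 k 2).image (Lf m) := hc
    replace hd : d ∈ (Finset.univ : Finset (Fin m)).image (Rf m) := hd
    obtain ⟨a₀, ha₀, rfl⟩ := Finset.mem_image.mp ha
    obtain ⟨b₀, hb₀, rfl⟩ := Finset.mem_image.mp hb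
    obtain ⟨c₀, hc₀, rfl⟩ := Finset.mem_image.mp hc
    obtain ⟨d₀, hd₀, rfl⟩ := Finset.mem_image.mp hd
    have hfL := filtTTTF (p := fun x : Fin (m+m) => x.1 < m)
      (Lf_lt a₀) (Lf_lt b₀) (Lf_lt c₀) (Rf_not_lt d₀)
    have h1 : ({x, y, z} : Finset _) = {Lf m a₀, Lf m b₀, Lf m c₀} := hL.symm.trans hfL
    have hdx : ({dn m x, dn m y, dn m z} : Finset (Fin m)) = {a₀, b₀, c₀} := by
      have := congrArg (Finset.image (dn m)) h1
      simpa [Finset.image_insert, dn_Lf] using this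
    exact (crossEdges3_iff _ _).mpr ⟨a₀, ha₀, b₀, hb₀, c₀, hc₀, hdx⟩
  · intro hk
    obtain ⟨a₀, ha₀, b₀, hb₀, c₀, hc₀, h3⟩ := (crossEdges3_iff _ _).mp hk
    have h1 : ({x, y, z} : Finset _) = {Lf m a₀, Lf m b₀, Lf m c₀} := by
      have := congrArg (Finset.image (Lf m)) h3
      simp only [Finset.image_insert, Finset.image_singleton] at this
      rwa [Lf_dn hpx, Lf_dn hpy, Lf_dn hpz] at this
    have he2 := filter_split hL hR
    apply (crossEdges4_iff _ _).mpr
    refine ⟨Lf m a₀, Finset.mem_image_of_mem _ ha₀, Lf m b₀, Finset.mem_image_of_mem _ hb₀,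
      Lf m c₀, Finset.mem_image_of_mem _ hc₀, w,
      Finset.mem_image.mpr ⟨dn m w, Finset.mem_univ _, Rf_dn hpw⟩, ?_⟩
    rw [he2, h1]
    ext u; simp; try tauto

lemma charCR (e : Finset (Fin (m + m))) {x y z w : Fin (m + m)}
    (hL : e.filter (fun u => u.1 < m) = {w})
    (hR : e.filter (fun u => ¬ u.1 < m) = {x, y, z}) (k : Fin F3) :
    e ∈ crossEdges (QQ P4 P3 A B C D (Sum.inr (Sum.inr (Sum.inr (Sum.inr k))))) ↔
      ({dn m x, dn m y, dn m z} : Finset (Fin m)) ∈ crossEdges (P3 k) := by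
  have hx : x ∈ e.filter (fun u => ¬ u.1 < m) := by rw [hR]; simp
  have hy : y ∈ e.filter (fun u => ¬ u.1 < m) := by rw [hR]; simp
  have hz : z ∈ e.filter (fun u => ¬ u.1 < m) := by rw [hR]; simp
  have hw : w ∈ e.filter (fun u => u.1 < m) := by rw [hL]; simp
  have hpx := (Finset.mem_filter.mp hx).2
  have hpy := (Finset.mem_filter.mp hy).2
  have hpz := (Finset.mem_filter.mp hz).2
  have hpw := (Finset.mem_filter.mp hw).2
  constructor
  · intro hk
    obtain ⟨a, ha, b, hb, c, hc, d, hd, rfl⟩ := (crossEdges4_iff _ _).mp hk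
    replace ha : a ∈ (P3 k 0).image (Rf m) := ha
    replace hb : b ∈ (P3 k 1).image (Rf m) := hb
    replace hc : c ∈ (P3 k 2).image (Rf m) := hc
    replace hd : d ∈ (Finset.univ : Finset (Fin m)).image (Lf m) := hd
    obtain ⟨a₀, ha₀, rfl⟩ := Finset.mem_image.mp ha
    obtain ⟨b₀, hb₀, rfl⟩ := Finset.mem_image.mp hb
    obtain ⟨c₀, hc₀, rfl⟩ := Finset.mem_image.mp hc
    obtain ⟨d₀, hd₀, rfl⟩ := Finset.mem_image.mp hd
    have hfR := filtTTTF (p := fun x : Fin (m+m) => ¬ x.1 < m)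
      (Rf_not_lt a₀) (Rf_not_lt b₀) (Rf_not_lt c₀) (not_not_intro (Lf_lt d₀))
    have h1 : ({x, y, z} : Finset _) = {Rf m a₀, Rf m b₀, Rf m c₀} := hR.symm.trans hfR
    have hdx : ({dn m x, dn m y, dn m z} : Finset (Fin m)) = {a₀, b₀, c₀} := by
      have := congrArg (Finset.image (dn m)) h1
      simpa [Finset.image_insert, dn_Rf] using this
    exact (crossEdges3_iff _ _).mpr ⟨a₀, ha₀, b₀, hb₀, c₀, hc₀, hdx⟩
  · intro hk
    obtain ⟨a₀, ha₀, b₀, hb₀, c₀, hc₀, h3⟩ := (crossEdges3_iff _ _).mp hk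
    have h1 : ({x, y, z} : Finset _) = {Rf m a₀, Rf m b₀, Rf m c₀} := by
      have := congrArg (Finset.image (Rf m)) h3
      simp only [Finset.image_insert, Finset.image_singleton] at this
      rwa [Rf_dn hpx, Rf_dn hpy, Rf_dn hpz] at this
    have he2 := filter_split hL hR
    apply (crossEdges4_iff _ _).mpr
    refine ⟨Rf m a₀, Finset.mem_image_of_mem _ ha₀, Rf m b₀, Finset.mem_image_of_mem _ hb₀,
      Rf m c₀, Finset.mem_image_of_mem _ hc₀, w,
      Finset.mem_image.mpr ⟨dn m w, Finset.mem_univ _, Lf_dn hpw⟩, ?_⟩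
    rw [he2, h1]
    ext u; simp; try tauto

lemma QQcov (h4cov : ∀ e : Finset (Fin m), e.card = 4 → ∃! k, e ∈ crossEdges (P4 k))
    (h3cov : ∀ e : Finset (Fin m), e.card = 3 → ∃! k, e ∈ crossEdges (P3 k))
    (hgcov : ∀ p : Sym2 (Fin m) × Sym2 (Fin m),
      p.1 ∈ (SimpleGraph.completeGraph (Fin m)).edgeSet → p.2 ∈ (SimpleGraph.completeGraph (Fin m)).edgeSet →
      ∃! k, p.1 ∈ bicliqueEdges (A k) (B k) ∧ p.2 ∈ bicliqueEdges (C k) (D k)) :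
    ∀ e : Finset (Fin (m + m)), e.card = 4 →
      ∃! k, e ∈ crossEdges (QQ P4 P3 A B C D k) := by
  intro e he
  have hsplit : (e.filter (fun x : Fin (m + m) => x.1 < m)).card +
      (e.filter (fun x : Fin (m + m) => ¬ x.1 < m)).card = e.card :=
    Finset.card_filter_add_card_filter_not _
  have hle : (e.filter (fun x : Fin (m + m) => x.1 < m)).card ≤ 4 :=
    he ▸ Finset.card_filter_le _ _
  have hcases : (e.filter (fun x : Fin (m + m) => x.1 < m)).card = 0 ∨
      (e.filter (fun x : Fin (m + m) => x.1 < m)).card = 1 ∨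
      (e.filter (fun x : Fin (m + m) => x.1 < m)).card = 2 ∨
      (e.filter (fun x : Fin (m + m) => x.1 < m)).card = 3 ∨
      (e.filter (fun x : Fin (m + m) => x.1 < m)).card = 4 := by omega
  rcases hcases with ht | ht | ht | ht | ht
  -- t = 0 : all right
  · have hfe : e.filter (fun x : Fin (m + m) => ¬ x.1 < m) = e :=
      Finset.eq_of_subset_of_card_le (Finset.filter_subset _ _) (by omega)
    have hsub : ∀ x ∈ e, ¬ x.1 < m := by
      intro x hx; rw [← hfe] at hx; exact (Finset.mem_filter.mp hx).2
    have he' : (e.image (dn m)).card = 4 := by rw [card_image_dn_R hsub, he]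
    obtain ⟨k, hk, hku⟩ := h4cov _ he'
    refine ⟨Sum.inr (Sum.inl k), (charB P4 P3 A B C D e hsub k).mpr hk, ?_⟩
    rintro (k' | k' | k' | k' | k') hk'
    · have := sideL P4 P3 A B C D _ _ he hk'
      simp only [pat, Sum.elim_inl, Sum.elim_inr] at this; exfalso; omega
    · exact congrArg (fun j => Sum.inr (Sum.inl j))
        (hku k' ((charB P4 P3 A B C D e hsub k').mp hk'))
    · have := sideL P4 P3 A B C D _ _ he hk'
      simp only [pat, Sum.elim_inl, Sum.elim_inr] at this; exfalso; omega
    · have := sideL P4 P3 A B C D _ _ he hk'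
      simp only [pat, Sum.elim_inl, Sum.elim_inr] at this; exfalso; omega
    · have := sideL P4 P3 A B C D _ _ he hk'
      simp only [pat, Sum.elim_inl, Sum.elim_inr] at this; exfalso; omega
  -- t = 1 : one left, three right
  · obtain ⟨w, hL⟩ := Finset.card_eq_one.mp ht
    have hneg : (e.filter (fun x : Fin (m + m) => ¬ x.1 < m)).card = 3 := by omega
    obtain ⟨x, y, z, hxy, hxz, hyz, hR⟩ := Finset.card_eq_three.mp hneg
    have hx : x ∈ e.filter (fun u : Fin (m + m) => ¬ u.1 < m) := by rw [hR]; simp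
    have hy : y ∈ e.filter (fun u : Fin (m + m) => ¬ u.1 < m) := by rw [hR]; simp
    have hz : z ∈ e.filter (fun u : Fin (m + m) => ¬ u.1 < m) := by rw [hR]; simp
    have hpx := (Finset.mem_filter.mp hx).2
    have hpy := (Finset.mem_filter.mp hy).2
    have hpz := (Finset.mem_filter.mp hz).2
    have hdxy : dn m x ≠ dn m y := fun hc => hxy (by rw [← Rf_dn hpx, ← Rf_dn hpy, hc])
    have hdxz : dn m x ≠ dn m z := fun hc => hxz (by rw [← Rf_dn hpx, ← Rf_dn hpz, hc])
    have hdyz : dn m y ≠ dn m z := fun hc => hyz (by rw [← Rf_dn hpy, ← Rf_dn hpz, hc])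
    have htrip : ({dn m x, dn m y, dn m z} : Finset (Fin m)).card = 3 :=
      Finset.card_eq_three.mpr ⟨_, _, _, hdxy, hdxz, hdyz, rfl⟩
    obtain ⟨k, hk, hku⟩ := h3cov _ htrip
    refine ⟨Sum.inr (Sum.inr (Sum.inr (Sum.inr k))),
      (charCR P4 P3 A B C D e hL hR k).mpr hk, ?_⟩
    rintro (k' | k' | k' | k' | k') hk'
    · have := sideL P4 P3 A B C D _ _ he hk'
      simp only [pat, Sum.elim_inl, Sum.elim_inr] at this; exfalso; omega
    · have := sideL P4 P3 A B C D _ _ he hk'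
      simp only [pat, Sum.elim_inl, Sum.elim_inr] at this; exfalso; omega
    · have := sideL P4 P3 A B C D _ _ he hk'
      simp only [pat, Sum.elim_inl, Sum.elim_inr] at this; exfalso; omega
    · have := sideL P4 P3 A B C D _ _ he hk'
      simp only [pat, Sum.elim_inl, Sum.elim_inr] at this; exfalso; omega
    · exact congrArg (fun j => Sum.inr (Sum.inr (Sum.inr (Sum.inr j))))
        (hku k' ((charCR P4 P3 A B C D e hL hR k').mp hk'))
  -- t = 2
  · obtain ⟨x, y, hxy, hL⟩ := Finset.card_eq_two.mp ht
    have hneg : (e.filter (fun x : Fin (m + m) => ¬ x.1 < m)).card = 2 := by omega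
    obtain ⟨z, w, hzw, hR⟩ := Finset.card_eq_two.mp hneg
    have hx : x ∈ e.filter (fun u : Fin (m + m) => u.1 < m) := by rw [hL]; simp
    have hy : y ∈ e.filter (fun u : Fin (m + m) => u.1 < m) := by rw [hL]; simp
    have hz : z ∈ e.filter (fun u : Fin (m + m) => ¬ u.1 < m) := by rw [hR]; simp
    have hw : w ∈ e.filter (fun u : Fin (m + m) => ¬ u.1 < m) := by rw [hR]; simp
    have hpx := (Finset.mem_filter.mp hx).2
    have hpy := (Finset.mem_filter.mp hy).2
    have hpz := (Finset.mem_filter.mp hz).2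
    have hpw := (Finset.mem_filter.mp hw).2
    have hdxy : dn m x ≠ dn m y := fun hc => hxy (by rw [← Lf_dn hpx, ← Lf_dn hpy, hc])
    have hdzw : dn m z ≠ dn m w := fun hc => hzw (by rw [← Rf_dn hpz, ← Rf_dn hpw, hc])
    have hedge1 : s(dn m x, dn m y) ∈ (SimpleGraph.completeGraph (Fin m)).edgeSet := by
      simp [SimpleGraph.completeGraph, hdxy]
    have hedge2 : s(dn m z, dn m w) ∈ (SimpleGraph.completeGraph (Fin m)).edgeSet := by
      simp [SimpleGraph.completeGraph, hdzw]
    obtain ⟨k, hk, hku⟩ := hgcov (s(dn m x, dn m y), s(dn m z, dn m w)) hedge1 hedge2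
    refine ⟨Sum.inr (Sum.inr (Sum.inl k)),
      (charG P4 P3 A B C D e hxy hzw hL hR k).mpr hk, ?_⟩
    rintro (k' | k' | k' | k' | k') hk'
    · have := sideL P4 P3 A B C D _ _ he hk'
      simp only [pat, Sum.elim_inl, Sum.elim_inr] at this; exfalso; omega
    · have := sideL P4 P3 A B C D _ _ he hk'
      simp only [pat, Sum.elim_inl, Sum.elim_inr] at this; exfalso; omega
    · exact congrArg (fun j => Sum.inr (Sum.inr (Sum.inl j)))
        (hku k' ((charG P4 P3 A B C D e hxy hzw hL hR k').mp hk'))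
    · have := sideL P4 P3 A B C D _ _ he hk'
      simp only [pat, Sum.elim_inl, Sum.elim_inr] at this; exfalso; omega
    · have := sideL P4 P3 A B C D _ _ he hk'
      simp only [pat, Sum.elim_inl, Sum.elim_inr] at this; exfalso; omega
  -- t = 3
  · obtain ⟨x, y, z, hxy, hxz, hyz, hL⟩ := Finset.card_eq_three.mp ht
    have hneg : (e.filter (fun x : Fin (m + m) => ¬ x.1 < m)).card = 1 := by omega
    obtain ⟨w, hR⟩ := Finset.card_eq_one.mp hneg
    have hx : x ∈ e.filter (fun u : Fin (m + m) => u.1 < m) := by rw [hL]; simp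
    have hy : y ∈ e.filter (fun u : Fin (m + m) => u.1 < m) := by rw [hL]; simp
    have hz : z ∈ e.filter (fun u : Fin (m + m) => u.1 < m) := by rw [hL]; simp
    have hpx := (Finset.mem_filter.mp hx).2
    have hpy := (Finset.mem_filter.mp hy).2
    have hpz := (Finset.mem_filter.mp hz).2
    have hdxy : dn m x ≠ dn m y := fun hc => hxy (by rw [← Lf_dn hpx, ← Lf_dn hpy, hc])
    have hdxz : dn m x ≠ dn m z := fun hc => hxz (by rw [← Lf_dn hpx, ← Lf_dn hpz, hc])
    have hdyz : dn m y ≠ dn m z := fun hc => hyz (by rw [← Lf_dn hpy, ← Lf_dn hpz, hc])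
    have htrip : ({dn m x, dn m y, dn m z} : Finset (Fin m)).card = 3 :=
      Finset.card_eq_three.mpr ⟨_, _, _, hdxy, hdxz, hdyz, rfl⟩
    obtain ⟨k, hk, hku⟩ := h3cov _ htrip
    refine ⟨Sum.inr (Sum.inr (Sum.inr (Sum.inl k))),
      (charCL P4 P3 A B C D e hL hR k).mpr hk, ?_⟩
    rintro (k' | k' | k' | k' | k') hk'
    · have := sideL P4 P3 A B C D _ _ he hk'
      simp only [pat, Sum.elim_inl, Sum.elim_inr] at this; exfalso; omega
    · have := sideL P4 P3 A B C D _ _ he hk'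
      simp only [pat, Sum.elim_inl, Sum.elim_inr] at this; exfalso; omega
    · have := sideL P4 P3 A B C D _ _ he hk'
      simp only [pat, Sum.elim_inl, Sum.elim_inr] at this; exfalso; omega
    · exact congrArg (fun j => Sum.inr (Sum.inr (Sum.inr (Sum.inl j))))
        (hku k' ((charCL P4 P3 A B C D e hL hR k').mp hk'))
    · have := sideL P4 P3 A B C D _ _ he hk'
      simp only [pat, Sum.elim_inl, Sum.elim_inr] at this; exfalso; omega
  -- t = 4 : all left
  · have hfe : e.filter (fun x : Fin (m + m) => x.1 < m) = e :=
      Finset.eq_of_subset_of_card_le (Finset.filter_subset _ _) (by omega)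
    have hsub : ∀ x ∈ e, x.1 < m := by
      intro x hx; rw [← hfe] at hx; exact (Finset.mem_filter.mp hx).2
    have he' : (e.image (dn m)).card = 4 := by rw [card_image_dn_L hsub, he]
    obtain ⟨k, hk, hku⟩ := h4cov _ he'
    refine ⟨Sum.inl k, (charA P4 P3 A B C D e hsub k).mpr hk, ?_⟩
    rintro (k' | k' | k' | k' | k') hk'
    · exact congrArg Sum.inl (hku k' ((charA P4 P3 A B C D e hsub k').mp hk'))
    · have := sideL P4 P3 A B C D _ _ he hk'
      simp only [pat, Sum.elim_inl, Sum.elim_inr] at this; exfalso; omega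
    · have := sideL P4 P3 A B C D _ _ he hk'
      simp only [pat, Sum.elim_inl, Sum.elim_inr] at this; exfalso; omega
    · have := sideL P4 P3 A B C D _ _ he hk'
      simp only [pat, Sum.elim_inl, Sum.elim_inr] at this; exfalso; omega
    · have := sideL P4 P3 A B C D _ _ he hk'
      simp only [pat, Sum.elim_inl, Sum.elim_inr] at this; exfalso; omega

end core
theorem stmt4 (n : ℕ) (hn : 4 ≤ n) (he : Even n) :
    fr 4 n ≤ 2 * fr 4 (n / 2) + gn (n / 2) + 2 * fr 3 (n / 2) := by
  obtain ⟨m, rfl⟩ := he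
  have hhalf : (m + m) / 2 = m := by omega
  rw [hhalf]
  have h4 : fr 4 m ∈ {m' | ∃ P : Fin m' → Fin 4 → Finset (Fin m),
      (∀ k, Pairwise (Function.onFun Disjoint (P k))) ∧
      ∀ e : Finset (Fin m), e.card = 4 → ∃! k, e ∈ crossEdges (P k)} :=
    Nat.sInf_mem (frSet_nonempty_s4 4 m)
  have h3 : fr 3 m ∈ {m' | ∃ P : Fin m' → Fin 3 → Finset (Fin m),
      (∀ k, Pairwise (Function.onFun Disjoint (P k))) ∧
      ∀ e : Finset (Fin m), e.card = 3 → ∃! k, e ∈ crossEdges (P k)} :=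
    Nat.sInf_mem (frSet_nonempty_s4 3 m)
  have hg : gn m ∈ {m' | ∃ A B : Fin m' → Finset (Fin m), ∃ C D : Fin m' → Finset (Fin m),
      (∀ k, Disjoint (A k) (B k)) ∧ (∀ k, Disjoint (C k) (D k)) ∧
      (∀ k, bicliqueEdges (A k) (B k) ⊆ (SimpleGraph.completeGraph (Fin m)).edgeSet) ∧
      (∀ k, bicliqueEdges (C k) (D k) ⊆ (SimpleGraph.completeGraph (Fin m)).edgeSet) ∧
      ∀ p : Sym2 (Fin m) × Sym2 (Fin m),
        p.1 ∈ (SimpleGraph.completeGraph (Fin m)).edgeSet → p.2 ∈ (SimpleGraph.completeGraph (Fin m)).edgeSet →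
        ∃! k, p.1 ∈ bicliqueEdges (A k) (B k) ∧ p.2 ∈ bicliqueEdges (C k) (D k)} :=
    Nat.sInf_mem (gSet_nonempty m)
  obtain ⟨P4, h4disj, h4cov⟩ := h4
  obtain ⟨P3, h3disj, h3cov⟩ := h3
  obtain ⟨A, B, C, D, hAB, hCD, -, -, hgcov⟩ := hg
  have hcard : Fintype.card
      (Fin (fr 4 m) ⊕ Fin (fr 4 m) ⊕ Fin (gn m) ⊕ Fin (fr 3 m) ⊕ Fin (fr 3 m)) =
      2 * fr 4 m + gn m + 2 * fr 3 m := by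
    simp [Fintype.card_sum]
    omega
  have hmem : Fintype.card
      (Fin (fr 4 m) ⊕ Fin (fr 4 m) ⊕ Fin (gn m) ⊕ Fin (fr 3 m) ⊕ Fin (fr 3 m)) ∈
      {m' | ∃ P : Fin m' → Fin 4 → Finset (Fin (m + m)),
        (∀ k, Pairwise (Function.onFun Disjoint (P k))) ∧
        ∀ e : Finset (Fin (m + m)), e.card = 4 → ∃! k, e ∈ crossEdges (P k)} := by
    set ι := Fin (fr 4 m) ⊕ Fin (fr 4 m) ⊕ Fin (gn m) ⊕ Fin (fr 3 m) ⊕ Fin (fr 3 m)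
    let eqv : ι ≃ Fin (Fintype.card ι) := Fintype.equivFin ι
    refine ⟨fun j => QQ P4 P3 A B C D (eqv.symm j),
      fun j => QQdisj P4 P3 A B C D h4disj h3disj hAB hCD (eqv.symm j), ?_⟩
    intro e he
    obtain ⟨k, hk, hku⟩ := QQcov P4 P3 A B C D h4cov h3cov hgcov e he
    refine ⟨eqv k, ?_, ?_⟩
    · show e ∈ crossEdges (QQ P4 P3 A B C D (eqv.symm (eqv k)))
      rw [Equiv.symm_apply_apply]
      exact hk
    · intro j hj
      exact (Equiv.symm_apply_eq eqv).mp (hku (eqv.symm j) hj)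
  calc fr 4 (m + m) ≤ _ := Nat.sInf_le hmem
    _ = 2 * fr 4 m + gn m + 2 * fr 3 m := hcard
end

section
/- If g(K_a, K_b) = c for some a, b ≥ 2, then for all i, j ≥ 1 we have g(K_{1+(a-1)i}, K_{1+(b-1)j}) ≤ c i j. -/
open Finset

/-!
Blow-up of `K_a`: the vertices of `K_{1+(a-1)i}` are a root together with `i` ordered copies
`S_0, …, S_{i-1}` of a set of `a - 1` colours. At level `s`, discard the copies before `S_s`,
give `S_s` its `a - 1` colours, and send the root and all later copies to one extra colour.
An edge receives distinct colours at exactly one level, namely the lowest copy it meets (the root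
counts as the highest), so `K_{1+(a-1)i}` is the edge-disjoint union of `i` pullbacks of `K_a`.
Pulling an optimal block partition of `E(K_a) × E(K_b)` back along each of the `i j` pairs of
levels gives `c i j` blocks. For `a = 2` the blow-up is the star decomposition of `K_n`; pulling
back the single block of `E(K_2) × E(K_2)` shows that block partitions of `E(K_a) × E(K_b)` exist,
so the infimum defining `g(K_a, K_b)` is attained (`sInf ∅ = 0` in `ℕ`).
-/

variable {V W V' W' κ ι ι' : Type*}

lemma mem_bicliqueEdges {A B : Finset V} {u v : V} :
    s(u, v) ∈ bicliqueEdges A B ↔ u ∈ A ∧ v ∈ B ∨ v ∈ A ∧ u ∈ B := by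
  constructor
  · rintro ⟨x, hx, y, hy, h⟩
    rcases Sym2.eq_iff.mp h with ⟨rfl, rfl⟩ | ⟨rfl, rfl⟩ <;> tauto
  · rintro (⟨hu, hv⟩ | ⟨hv, hu⟩)
    · exact ⟨u, hu, v, hv, rfl⟩
    · exact ⟨v, hv, u, hu, Sym2.eq_swap⟩

lemma ne_of_mem_bicliqueEdges {A B : Finset V} (hAB : Disjoint A B) {u v : V}
    (h : s(u, v) ∈ bicliqueEdges A B) : u ≠ v := by
  rintro rfl
  rcases mem_bicliqueEdges.mp h with ⟨hA, hB⟩ | ⟨hA, hB⟩ <;>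
    exact Finset.disjoint_left.mp hAB hA hB

lemma mem_bicliqueEdges_filter [Fintype V'] [DecidableEq V] {P : V' → Prop} [DecidablePred P]
    {φ : V' → V} {A B : Finset V} {u v : V'} :
    s(u, v) ∈ bicliqueEdges {w | P w ∧ φ w ∈ A} {w | P w ∧ φ w ∈ B} ↔
      P u ∧ P v ∧ s(φ u, φ v) ∈ bicliqueEdges A B := by
  simp only [mem_bicliqueEdges, Finset.mem_filter, Finset.mem_univ, true_and]
  tauto

lemma bicliqueEdges_subset_edgeSet_top {A B : Finset V} (hAB : Disjoint A B) :
    bicliqueEdges A B ⊆ (⊤ : SimpleGraph V).edgeSet := by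
  rintro _ ⟨u, hu, v, hv, rfl⟩
  exact ne_of_mem_bicliqueEdges hAB ⟨u, hu, v, hv, rfl⟩

structure IsBlockPartition (G : SimpleGraph V) (H : SimpleGraph W)
    (A B : κ → Finset V) (C D : κ → Finset W) : Prop where
  disjoint_left : ∀ k, Disjoint (A k) (B k)
  disjoint_right : ∀ k, Disjoint (C k) (D k)
  subset_left : ∀ k, bicliqueEdges (A k) (B k) ⊆ G.edgeSet
  subset_right : ∀ k, bicliqueEdges (C k) (D k) ⊆ H.edgeSet
  existsUnique : ∀ p : Sym2 V × Sym2 W, p.1 ∈ G.edgeSet → p.2 ∈ H.edgeSet →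
    ∃! k, p.1 ∈ bicliqueEdges (A k) (B k) ∧ p.2 ∈ bicliqueEdges (C k) (D k)

def blockPartitionSizes (G : SimpleGraph V) (H : SimpleGraph W) : Set ℕ :=
  {m | ∃ (A B : Fin m → Finset V) (C D : Fin m → Finset W), IsBlockPartition G H A B C D}

lemma gGH_eq_sInf_blockPartitionSizes (G : SimpleGraph V) (H : SimpleGraph W) :
    gGH G H = sInf (blockPartitionSizes G H) := by
  unfold gGH
  congr 1
  ext m
  exact exists₄_congr fun A B C D ↦
    ⟨fun ⟨h₁, h₂, h₃, h₄, h₅⟩ ↦ ⟨h₁, h₂, h₃, h₄, h₅⟩,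
      fun ⟨h₁, h₂, h₃, h₄, h₅⟩ ↦ ⟨h₁, h₂, h₃, h₄, h₅⟩⟩

namespace IsBlockPartition

variable {G : SimpleGraph V} {H : SimpleGraph W} {A B : κ → Finset V} {C D : κ → Finset W}

lemma comp_equiv (h : IsBlockPartition G H A B C D) (e : ι ≃ κ) :
    IsBlockPartition G H (A ∘ e) (B ∘ e) (C ∘ e) (D ∘ e) where
  disjoint_left k := h.disjoint_left (e k)
  disjoint_right k := h.disjoint_right (e k)
  subset_left k := h.subset_left (e k)
  subset_right k := h.subset_right (e k)
  existsUnique p hp hq := e.existsUnique_congr_right.mpr (h.existsUnique p hp hq)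

lemma gGH_le_card [Fintype κ] (h : IsBlockPartition G H A B C D) :
    gGH G H ≤ Fintype.card κ :=
  gGH_eq_sInf_blockPartitionSizes G H ▸
    Nat.sInf_le ⟨_, _, _, _, h.comp_equiv (Fintype.equivFin κ).symm⟩

lemma exists_fin_gGH [Fintype κ] (h : IsBlockPartition G H A B C D) :
    ∃ (A' B' : Fin (gGH G H) → Finset V) (C' D' : Fin (gGH G H) → Finset W),
      IsBlockPartition G H A' B' C' D' := by
  rw [gGH_eq_sInf_blockPartitionSizes]
  exact Nat.sInf_mem (s := blockPartitionSizes G H)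
    ⟨_, _, _, _, _, h.comp_equiv (Fintype.equivFin κ).symm⟩

lemma of_top (hAB : ∀ k, Disjoint (A k) (B k)) (hCD : ∀ k, Disjoint (C k) (D k))
    (h : ∀ ⦃u v : V⦄ ⦃x y : W⦄, u ≠ v → x ≠ y →
      ∃! k, s(u, v) ∈ bicliqueEdges (A k) (B k) ∧ s(x, y) ∈ bicliqueEdges (C k) (D k)) :
    IsBlockPartition (⊤ : SimpleGraph V) (⊤ : SimpleGraph W) A B C D where
  disjoint_left := hAB
  disjoint_right := hCD
  subset_left k := bicliqueEdges_subset_edgeSet_top (hAB k)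
  subset_right k := bicliqueEdges_subset_edgeSet_top (hCD k)
  existsUnique := by
    rintro ⟨e, f⟩ he hf
    induction e using Sym2.inductionOn
    induction f using Sym2.inductionOn
    exact h he hf

end IsBlockPartition

lemma isBlockPartition_top_fin_two :
    IsBlockPartition (⊤ : SimpleGraph (Fin 2)) (⊤ : SimpleGraph (Fin 2))
      (fun _ : Unit ↦ {0}) (fun _ ↦ {1}) (fun _ ↦ {0}) (fun _ ↦ {1}) := by
  have hmem : ∀ ⦃u v : Fin 2⦄, u ≠ v → s(u, v) ∈ bicliqueEdges {0} {1} := by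
    intro u v huv
    rw [mem_bicliqueEdges]
    fin_cases u <;> fin_cases v <;> simp_all
  exact .of_top (fun _ ↦ by decide) (fun _ ↦ by decide)
    fun u v x y huv hxy ↦ ⟨(), ⟨hmem huv, hmem hxy⟩, fun _ _ ↦ rfl⟩

/-- The complete graph on `V'` is the edge-disjoint union, over `s`, of the preimages of the
complete graph on `V` under `φ s`, restricted to `U s`. -/
def IsPullbackDecomposition (U : ι → Set V') (φ : ι → V' → V) : Prop :=
  ∀ ⦃u v : V'⦄, u ≠ v → ∃! s, u ∈ U s ∧ v ∈ U s ∧ φ s u ≠ φ s v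

lemma IsPullbackDecomposition.comp {V'' V₀ : Type*} {U : ι → Set V'} {φ : ι → V' → V}
    (h : IsPullbackDecomposition U φ) {f : V'' → V'} (hf : f.Injective) {g : V → V₀}
    (hg : g.Injective) :
    IsPullbackDecomposition (fun s ↦ f ⁻¹' U s) (fun s ↦ g ∘ φ s ∘ f) := by
  intro u v huv
  simpa only [Set.mem_preimage, Function.comp_apply, hg.ne_iff] using h (hf.ne huv)

/-- `none` is the root and `some (c, t)` the vertex of colour `c` in copy `t`; at level `s` the
root and the later copies collapse to `none`. -/
lemma isPullbackDecomposition_blowup {α : Type*} [LinearOrder ι] :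
    IsPullbackDecomposition (fun (s : ι) ↦ {v : Option (α × ι) | ∀ p ∈ v, s ≤ p.2})
      (fun s v ↦ v.bind fun p ↦ if p.2 = s then some p.1 else none) := by
  rintro (_ | ⟨c, t⟩) (_ | ⟨c', t'⟩) huv
  · exact absurd rfl huv
  · exact ⟨t', by simp, fun s hs ↦ by simp_all⟩
  · exact ⟨t, by simp, fun s hs ↦ by simp_all⟩
  · refine ⟨min t t', ?_, fun s hs ↦ ?_⟩
    · rcases lt_trichotomy t t' with h | rfl | h
      · simp [h.le, h.ne']
      · simpa using huv
      · simp [h.le, h.ne']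
    · simp only [Set.mem_ofPred_eq, Option.mem_def, Option.some.injEq, forall_eq',
        Option.bind_some] at hs
      split_ifs at hs <;> simp_all

def finBlowupEquiv (n i : ℕ) : Fin (1 + n * i) ≃ Option (Fin n × Fin i) :=
  (finCongr (Nat.add_comm 1 _)).trans
    ((finSuccEquiv _).trans (Equiv.optionCongr finProdFinEquiv.symm))

lemma exists_isPullbackDecomposition_fin {n a i : ℕ} (ha : 1 ≤ a) (hn : n ≤ 1 + (a - 1) * i) :
    ∃ (U : Fin i → Set (Fin n)) (φ : Fin i → Fin n → Fin a),
      IsPullbackDecomposition U φ := by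
  let colours : Fin a ≃ Option (Fin (a - 1)) := (finCongr (by omega)).trans (finSuccEquiv _)
  exact ⟨_, _, isPullbackDecomposition_blowup.comp
    ((finBlowupEquiv (a - 1) i).injective.comp (Fin.castLE_injective hn)) colours.symm.injective⟩

lemma IsBlockPartition.pullback [Fintype V'] [Fintype W'] [DecidableEq V] [DecidableEq W]
    {A B : κ → Finset V} {C D : κ → Finset W}
    (h : IsBlockPartition (⊤ : SimpleGraph V) (⊤ : SimpleGraph W) A B C D)
    {U : ι → Set V'} {φ : ι → V' → V} (hφ : IsPullbackDecomposition U φ)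
    {U' : ι' → Set W'} {ψ : ι' → W' → W} (hψ : IsPullbackDecomposition U' ψ) :
    ∃ (A' B' : κ × ι × ι' → Finset V') (C' D' : κ × ι × ι' → Finset W'),
      IsBlockPartition (⊤ : SimpleGraph V') (⊤ : SimpleGraph W') A' B' C' D' := by
  classical
  refine ⟨fun q ↦ {v | v ∈ U q.2.1 ∧ φ q.2.1 v ∈ A q.1},
    fun q ↦ {v | v ∈ U q.2.1 ∧ φ q.2.1 v ∈ B q.1},
    fun q ↦ {w | w ∈ U' q.2.2 ∧ ψ q.2.2 w ∈ C q.1},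
    fun q ↦ {w | w ∈ U' q.2.2 ∧ ψ q.2.2 w ∈ D q.1},
    .of_top (fun q ↦ ?_) (fun q ↦ ?_) fun u v x y huv hxy ↦ ?_⟩
  · exact Finset.disjoint_filter.mpr fun v _ hA hB ↦
      Finset.disjoint_left.mp (h.disjoint_left _) hA.2 hB.2
  · exact Finset.disjoint_filter.mpr fun w _ hC hD ↦
      Finset.disjoint_left.mp (h.disjoint_right _) hC.2 hD.2
  simp only [mem_bicliqueEdges_filter]
  obtain ⟨s, ⟨hu, hv, hφuv⟩, hs⟩ := hφ huv
  obtain ⟨t, ⟨hx, hy, hψxy⟩, ht⟩ := hψ hxy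
  obtain ⟨k, hk, hk'⟩ := h.existsUnique (s(φ s u, φ s v), s(ψ t x, ψ t y)) hφuv hψxy
  refine ⟨(k, s, t), ⟨⟨hu, hv, hk.1⟩, ⟨hx, hy, hk.2⟩⟩, ?_⟩
  rintro ⟨k', s', t'⟩ ⟨⟨hu', hv', hk₁⟩, ⟨hx', hy', hk₂⟩⟩
  obtain rfl := hs s' ⟨hu', hv', ne_of_mem_bicliqueEdges (h.disjoint_left k') hk₁⟩
  obtain rfl := ht t' ⟨hx', hy', ne_of_mem_bicliqueEdges (h.disjoint_right k') hk₂⟩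
  obtain rfl := hk' k' ⟨hk₁, hk₂⟩
  rfl

lemma exists_isBlockPartition_top_fin {a b : ℕ} (ha : 1 ≤ a) (hb : 1 ≤ b) :
    ∃ (A B : Fin (gGH (⊤ : SimpleGraph (Fin a)) (⊤ : SimpleGraph (Fin b))) → Finset (Fin a))
      (C D : Fin (gGH (⊤ : SimpleGraph (Fin a)) (⊤ : SimpleGraph (Fin b))) → Finset (Fin b)),
      IsBlockPartition ⊤ ⊤ A B C D := by
  obtain ⟨U, φ, hφ⟩ :=
    exists_isPullbackDecomposition_fin (n := a) (a := 2) (i := a - 1) one_le_two (by omega)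
  obtain ⟨U', ψ, hψ⟩ :=
    exists_isPullbackDecomposition_fin (n := b) (a := 2) (i := b - 1) one_le_two (by omega)
  obtain ⟨A, B, C, D, h⟩ := isBlockPartition_top_fin_two.pullback hφ hψ
  exact h.exists_fin_gGH

theorem stmt5 (a b c : ℕ) (ha : 2 ≤ a) (hb : 2 ≤ b)
    (hc : gGH (SimpleGraph.completeGraph (Fin a)) (SimpleGraph.completeGraph (Fin b)) = c) :
    ∀ i j : ℕ, 1 ≤ i → 1 ≤ j →
      gGH (SimpleGraph.completeGraph (Fin (1 + (a - 1) * i))) (SimpleGraph.completeGraph (Fin (1 + (b - 1) * j))) ≤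
        c * i * j := by
  intro i j _ _
  subst hc
  obtain ⟨A, B, C, D, h⟩ :=
    exists_isBlockPartition_top_fin (a := a) (b := b) (by omega) (by omega)
  obtain ⟨U, φ, hφ⟩ := exists_isPullbackDecomposition_fin (a := a) (i := i) (by omega) le_rfl
  obtain ⟨U', ψ, hψ⟩ := exists_isPullbackDecomposition_fin (a := b) (i := j) (by omega) le_rfl
  obtain ⟨A', B', C', D', h'⟩ := h.pullback hφ hψ
  simpa [mul_assoc] using h'.gGH_le_card
end
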